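/- arXiv:1908.07077 — 7 statements merged into one kernel-verified Lean document; each statement's English description precedes it below -/
import Mathlib

section
/- Let X be a real Hilbert space, let M : X → 2^X be a maximally monotone operator with zer M ≠ ∅, let x₀ ∈ X, let ε ∈ (0,1), let (λ_n) be a sequence in [ε, 2−ε], and let (γ_n) be a sequence in [ε, ∞). For every n let x̃_n ∈ X and let K_n : X → X be a monotone operator such that ran K_n ⊂ ran(K_n + γ_n M) and K_n + γ_n M is injective. Define sequences by y_n = J^{K_n}_{γ_n M} x̃_n, y_n* = γ_n^{-1}(K_n x̃_n − K_n y_n), and x_{n+1} = x_n + λ_n (⟪y_n − x_n, y_n*⟫/‖y_n*‖²) y_n* if ⟪y_n − x_n, y_n*⟫ < 0, and x_{n+1} = x_n otherwise. Then: (i) Σ_{n∈ℕ} ‖x_{n+1} − x_n‖² < ∞; (ii) if moreover x̃_n − x_n → 0 strongly and the implication [⟪x̃_n − y_n, N(K_n x̃_n − K_n y_n)⟫ → 0 ⟹ (x̃_n − y_n ⇀ 0 weakly and K_n x̃_n − K_n y_n → 0 strongly)] holds, then (x_n) converges weakly to a point in zer M. -/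
/-!
Each step `x (n + 1)` is a relaxed projection of `x n` onto the half-space
`{z | ⟪z - y n, ystar n⟫ ≤ 0}`, which contains `zer M` because `ystar n ∈ M (y n)` and `M` is
monotone. So `(x n)` is Fejér monotone with respect to `zer M`, each step decreasing
`‖x n - z‖²` by at least `ε / 2 * ‖x (n + 1) - x n‖²`; this gives (i).

For (ii), the depth `⟪xt n - y n, ystar n⟫ / ‖ystar n‖` is at most
`‖xt n - x n‖ + ‖x (n + 1) - x n‖ / ε`, hence tends to `0`. The hypothesis then gives
`y n - x n ⇀ 0` and `ystar n → 0`, so by maximal monotonicity every weak cluster point of `(x n)`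
is a zero of `M`, and Opial's lemma gives weak convergence.
-/

open Filter Topology RealInnerProductSpace

/-- `N(u) = u/‖u‖` if `u ≠ 0`, and `N(0) = 0`. -/
noncomputable def nrmz {X : Type*} [NormedAddCommGroup X] [Module ℝ X] (u : X) : X :=
  open Classical in if u = 0 then 0 else ‖u‖⁻¹ • u

section WeakLimits

variable {X : Type*} [NormedAddCommGroup X] [InnerProductSpace ℝ X]

theorem exists_tendsto_inner_of_norm_le [CompleteSpace X] {ι : Type*} {x : ι → X} {R : ℝ}
    (hx : ∀ i, ‖x i‖ ≤ R) (U : Ultrafilter ι) :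
    ∃ w : X, ∀ u, Tendsto (fun i => ⟪x i, u⟫) U (𝓝 ⟪w, u⟫) := by
  have hbound : ∀ u i, |⟪x i, u⟫| ≤ R * ‖u‖ := fun u i =>
    (abs_real_inner_le_norm _ _).trans (mul_le_mul_of_nonneg_right (hx i) (norm_nonneg _))
  have hlim : ∀ u, ∃ c, Tendsto (fun i => ⟪x i, u⟫) U (𝓝 c) := fun u => by
    obtain ⟨c, -, hc⟩ := (isCompact_Icc (a := -(R * ‖u‖)) (b := R * ‖u‖)).ultrafilter_le_nhds
      (U.map fun i => ⟪x i, u⟫)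
      (le_principal_iff.mpr (Ultrafilter.mem_map.mpr (univ_mem' fun i => abs_le.mp (hbound u i))))
    exact ⟨c, hc⟩
  choose c hc using hlim
  let L : X →ₗ[ℝ] ℝ :=
    { toFun := c
      map_add' := fun u v => tendsto_nhds_unique (hc (u + v)) <| by
        simpa only [inner_add_right] using (hc u).add (hc v)
      map_smul' := fun r u => tendsto_nhds_unique (hc (r • u)) <| by
        simpa only [real_inner_smul_right, RingHom.id_apply, smul_eq_mul] using (hc u).const_mul r }
  have hL : ∀ u, ‖L u‖ ≤ R * ‖u‖ := fun u =>
    le_of_tendsto (hc u).norm (Eventually.of_forall fun i => hbound u i)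
  refine ⟨(InnerProductSpace.toDual ℝ X).symm (L.mkContinuous R hL), fun u => ?_⟩
  rw [InnerProductSpace.toDual_symm_apply]
  exact hc u

theorem eq_of_tendsto_inner_of_tendsto_norm_sub {ι : Type*} {F l₁ l₂ : Filter ι} [l₁.NeBot]
    [l₂.NeBot] (h₁ : l₁ ≤ F) (h₂ : l₂ ≤ F) {x : ι → X} {z w : X} {a b : ℝ}
    (hz : Tendsto (fun i => ‖x i - z‖) F (𝓝 a)) (hw : Tendsto (fun i => ‖x i - w‖) F (𝓝 b))
    (hxz : ∀ u, Tendsto (fun i => ⟪x i, u⟫) l₁ (𝓝 ⟪z, u⟫))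
    (hxw : ∀ u, Tendsto (fun i => ⟪x i, u⟫) l₂ (𝓝 ⟪w, u⟫)) : z = w := by
  have hid : ∀ i, ⟪x i, w - z⟫ = (‖x i - z‖ ^ 2 - ‖x i - w‖ ^ 2 - ‖z‖ ^ 2 + ‖w‖ ^ 2) / 2 := by
    intro i
    rw [norm_sub_sq_real, norm_sub_sq_real, inner_sub_right]
    ring
  have hF : Tendsto (fun i => ⟪x i, w - z⟫) F (𝓝 ((a ^ 2 - b ^ 2 - ‖z‖ ^ 2 + ‖w‖ ^ 2) / 2)) := by
    simp only [hid]
    exact ((((hz.pow 2).sub (hw.pow 2)).sub_const _).add_const _).div_const 2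
  have hzw : ⟪z, w - z⟫ = ⟪w, w - z⟫ :=
    (tendsto_nhds_unique (hxz _) (hF.mono_left h₁)).trans
      (tendsto_nhds_unique (hxw _) (hF.mono_left h₂)).symm
  have : ⟪w - z, w - z⟫ = 0 := by rw [inner_sub_left, hzw, sub_self]
  exact (sub_eq_zero.mp (inner_self_eq_zero.mp this)).symm

end WeakLimits

section Fejer

variable {X : Type*} [NormedAddCommGroup X]

def IsFejerMonotone (C : Set X) (x : ℕ → X) : Prop :=
  ∀ z ∈ C, Antitone fun n => ‖x n - z‖

namespace IsFejerMonotone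

variable {C : Set X} {x : ℕ → X} {z : X}

theorem norm_le (hx : IsFejerMonotone C x) (hz : z ∈ C) (n : ℕ) : ‖x n‖ ≤ ‖x 0 - z‖ + ‖z‖ :=
  calc ‖x n‖ ≤ ‖x n - z‖ + ‖z‖ := norm_le_norm_sub_add _ _
    _ ≤ ‖x 0 - z‖ + ‖z‖ := by gcongr; exact hx z hz (Nat.zero_le n)

theorem exists_tendsto_norm_sub (hx : IsFejerMonotone C x) (hz : z ∈ C) :
    ∃ a, Tendsto (fun n => ‖x n - z‖) atTop (𝓝 a) :=
  ⟨_, tendsto_atTop_ciInf (hx z hz) ⟨0, by rintro _ ⟨n, rfl⟩; exact norm_nonneg _⟩⟩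

/-- Opial's lemma. -/
theorem exists_tendsto_inner [InnerProductSpace ℝ X] [CompleteSpace X]
    (hx : IsFejerMonotone C x) (hC : C.Nonempty)
    (hclust : ∀ U : Ultrafilter ℕ, (U : Filter ℕ) ≤ atTop → ∀ w : X,
      (∀ u, Tendsto (fun n => ⟪x n, u⟫) U (𝓝 ⟪w, u⟫)) → w ∈ C) :
    ∃ z ∈ C, ∀ u, Tendsto (fun n => ⟪x n, u⟫) atTop (𝓝 ⟪z, u⟫) := by
  obtain ⟨z₀, hz₀⟩ := hC
  have hlim : ∀ U : Ultrafilter ℕ, (U : Filter ℕ) ≤ atTop →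
      ∃ w ∈ C, ∀ u, Tendsto (fun n => ⟪x n, u⟫) U (𝓝 ⟪w, u⟫) := fun U hU => by
    obtain ⟨w, hw⟩ := exists_tendsto_inner_of_norm_le (hx.norm_le hz₀) U
    exact ⟨w, hclust U hU w hw, hw⟩
  obtain ⟨z, hzC, hz⟩ := hlim _ (Ultrafilter.of_le atTop)
  refine ⟨z, hzC, fun u => (tendsto_iff_ultrafilter _ _ _).mpr fun U hU => ?_⟩
  obtain ⟨w, hwC, hw⟩ := hlim U hU
  obtain ⟨a, ha⟩ := hx.exists_tendsto_norm_sub hzC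
  obtain ⟨b, hb⟩ := hx.exists_tendsto_norm_sub hwC
  rw [eq_of_tendsto_inner_of_tendsto_norm_sub (Ultrafilter.of_le atTop) hU ha hb hz hw]
  exact hw u

theorem of_norm_sub_sq_add_le {c : ℝ} (hc : 0 ≤ c)
    (h : ∀ z ∈ C, ∀ n, ‖x (n + 1) - z‖ ^ 2 + c * ‖x (n + 1) - x n‖ ^ 2 ≤ ‖x n - z‖ ^ 2) :
    IsFejerMonotone C x := fun z hz =>
  antitone_nat_of_succ_le fun n => (pow_le_pow_iff_left₀ (norm_nonneg _) (norm_nonneg _)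
    two_ne_zero).mp (by nlinarith [h z hz n, mul_nonneg hc (sq_nonneg ‖x (n + 1) - x n‖)])

end IsFejerMonotone

theorem summable_of_add_le {a b : ℕ → ℝ} (ha : ∀ n, 0 ≤ a n) (hb : ∀ n, 0 ≤ b n)
    (h : ∀ n, a (n + 1) + b n ≤ a n) : Summable b := by
  refine summable_of_sum_range_le hb (c := a 0) fun N => ?_
  have : ∑ n ∈ Finset.range N, b n ≤ a 0 - a N := by
    rw [← neg_sub, ← Finset.sum_range_sub, ← Finset.sum_neg_distrib]
    exact Finset.sum_le_sum fun n _ => by linarith [h n]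
  linarith [ha N]

theorem summable_norm_succ_sub_sq_of_add_le {x : ℕ → X} {z : X} {c : ℝ} (hc : 0 < c)
    (h : ∀ n, ‖x (n + 1) - z‖ ^ 2 + c * ‖x (n + 1) - x n‖ ^ 2 ≤ ‖x n - z‖ ^ 2) :
    Summable fun n => ‖x (n + 1) - x n‖ ^ 2 :=
  (summable_mul_left_iff hc.ne').mp <|
    summable_of_add_le (a := fun n => ‖x n - z‖ ^ 2) (fun n => sq_nonneg _)
      (fun n => by positivity) h

end Fejer

section MonotoneOperators

variable {X : Type*} [NormedAddCommGroup X] [InnerProductSpace ℝ X]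

def IsMonotoneOperator (A : X → Set X) : Prop :=
  ∀ x y u v, u ∈ A x → v ∈ A y → (0 : ℝ) ≤ ⟪x - y, u - v⟫

def IsMaximalMonotone (A : X → Set X) : Prop :=
  IsMonotoneOperator A ∧ ∀ B, IsMonotoneOperator B → (∀ x, A x ⊆ B x) → ∀ x, B x ⊆ A x

namespace IsMaximalMonotone

variable {M : X → Set X}

theorem mem_of_forall_inner_nonneg (hM : IsMaximalMonotone M) {w v : X}
    (h : ∀ p u, u ∈ M p → (0 : ℝ) ≤ ⟪w - p, v - u⟫) : v ∈ M w := by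
  let B : X → Set X := fun q => M q ∪ {u | q = w ∧ u = v}
  have hB : IsMonotoneOperator B := by
    rintro a b ua ub (hua | ⟨rfl, rfl⟩) (hub | ⟨rfl, rfl⟩)
    · exact hM.1 a b ua ub hua hub
    · exact h a ua hua |>.trans_eq (by rw [← inner_neg_neg, neg_sub, neg_sub])
    · exact h b ub hub
    · simp
  exact hM.2 B hB (fun q => Set.subset_union_left) w (Or.inr ⟨rfl, rfl⟩)

theorem zero_mem_of_tendsto {ι : Type*} {l : Filter ι} [l.NeBot] (hM : IsMaximalMonotone M)
    {y s : ι → X} {b : ι → ℝ} {w : X} (hs : ∀ i, s i ∈ M (y i))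
    (hy : ∀ u, Tendsto (fun i => ⟪y i, u⟫) l (𝓝 ⟪w, u⟫)) (hs0 : Tendsto s l (𝓝 0))
    (hb : Tendsto b l (𝓝 0)) (hle : ∀ i, ⟪y i, s i⟫ ≤ b i) : (0 : X) ∈ M w := by
  refine hM.mem_of_forall_inner_nonneg fun p u hu => ?_
  have hupper : ∀ i, (0 : ℝ) ≤ b i - ⟪p, s i⟫ - ⟪y i, u⟫ + ⟪p, u⟫ := fun i => by
    have := hM.1 _ _ _ _ (hs i) hu
    rw [inner_sub_left, inner_sub_right, inner_sub_right] at this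
    linarith [hle i]
  have hlim : Tendsto (fun i => b i - ⟪p, s i⟫ - ⟪y i, u⟫ + ⟪p, u⟫) l
      (𝓝 (0 - ⟪p, 0⟫ - ⟪w, u⟫ + ⟪p, u⟫)) :=
    ((hb.sub (tendsto_const_nhds.inner hs0)).sub (hy u)).add_const _
  have := ge_of_tendsto' hlim hupper
  rw [zero_sub, inner_neg_right, inner_sub_left]
  simp only [inner_zero_right] at this
  linarith

theorem zero_mem_of_tendsto_inner {ι : Type*} {l : Filter ι} [l.NeBot]
    (hM : IsMaximalMonotone M) {x z y s : ι → X} {R : ℝ} {w : X} (hs : ∀ i, s i ∈ M (y i))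
    (hzy : ∀ i, 0 ≤ ⟪z i - y i, s i⟫) (hxR : ∀ i, ‖x i‖ ≤ R)
    (hzx : Tendsto (fun i => z i - x i) l (𝓝 0))
    (hzyw : ∀ u, Tendsto (fun i => ⟪z i - y i, u⟫) l (𝓝 0)) (hs0 : Tendsto s l (𝓝 0))
    (hxw : ∀ u, Tendsto (fun i => ⟪x i, u⟫) l (𝓝 ⟪w, u⟫)) : (0 : X) ∈ M w := by
  have hxs : Tendsto (fun i => ⟪x i, s i⟫) l (𝓝 0) :=
    squeeze_zero_norm (fun i => (norm_inner_le_norm _ _).trans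
      (mul_le_mul_of_nonneg_right (hxR i) (norm_nonneg _))) (by simpa using hs0.norm.const_mul R)
  have hb : Tendsto (fun i => ⟪z i - x i, s i⟫ + ⟪x i, s i⟫) l (𝓝 0) := by
    simpa using (hzx.inner (𝕜 := ℝ) hs0).add hxs
  have hle : ∀ i, ⟪y i, s i⟫ ≤ ⟪z i - x i, s i⟫ + ⟪x i, s i⟫ := fun i => by
    rw [← inner_add_left, sub_add_cancel]
    linarith [hzy i, inner_sub_left (𝕜 := ℝ) (z i) (y i) (s i)]
  refine hM.zero_mem_of_tendsto hs (fun u => ?_) hs0 hb hle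
  have hyx : ∀ i, ⟪y i, u⟫ = ⟪x i, u⟫ + ⟪z i - x i, u⟫ - ⟪z i - y i, u⟫ := fun i => by
    simp only [inner_sub_left]; ring
  simpa [hyx] using ((hxw u).add (hzx.inner (𝕜 := ℝ) tendsto_const_nhds)).sub (hzyw u)

end IsMaximalMonotone

end MonotoneOperators

section RelaxedProjection

variable {X : Type*} [NormedAddCommGroup X] [InnerProductSpace ℝ X]

/-- `x + r (P x - x)`, where `P` is the projection onto the half-space `{z | ⟪z - y, s⟫ ≤ 0}`. -/
noncomputable def relaxedProjHalfspace (r : ℝ) (y s x : X) : X :=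
  if ⟪y - x, s⟫ < 0 then x + ((r * ⟪y - x, s⟫) / ‖s‖ ^ 2) • s else x

variable {r : ℝ} {y s x : X}

theorem relaxedProjHalfspace_sub_self_of_neg (h : ⟪y - x, s⟫ < 0) :
    relaxedProjHalfspace r y s x - x = ((r * ⟪y - x, s⟫) / ‖s‖ ^ 2) • s := by
  rw [relaxedProjHalfspace, if_pos h, add_sub_cancel_left]

theorem relaxedProjHalfspace_of_nonneg (h : 0 ≤ ⟪y - x, s⟫) :
    relaxedProjHalfspace r y s x = x := by
  rw [relaxedProjHalfspace, if_neg h.not_gt]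

theorem inner_sub_mul_le_norm_relaxedProjHalfspace_sub_mul (hr : 0 ≤ r) :
    ⟪x - y, s⟫ * r ≤ ‖relaxedProjHalfspace r y s x - x‖ * ‖s‖ := by
  rcases lt_or_ge ⟪y - x, s⟫ 0 with h | h
  · have hs : s ≠ 0 := by rintro rfl; simp at h
    have hs' : 0 < ‖s‖ := norm_pos_iff.mpr hs
    rw [relaxedProjHalfspace_sub_self_of_neg h, norm_smul, Real.norm_eq_abs,
      abs_of_nonpos (div_nonpos_of_nonpos_of_nonneg (mul_nonpos_of_nonneg_of_nonpos hr h.le)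
        (by positivity)), ← neg_sub, inner_neg_left]
    field_simp
    exact le_rfl
  · rw [← neg_sub, inner_neg_left]
    nlinarith [norm_nonneg (relaxedProjHalfspace r y s x - x), norm_nonneg s]

theorem mul_norm_relaxedProjHalfspace_sub_sq_le (hr : 0 ≤ r) {p : X} (hp : ⟪p - y, s⟫ ≤ 0) :
    r * ‖relaxedProjHalfspace r y s x - p‖ ^ 2 + (2 - r) * ‖relaxedProjHalfspace r y s x - x‖ ^ 2
      ≤ r * ‖x - p‖ ^ 2 := by
  rcases lt_or_ge ⟪y - x, s⟫ 0 with h | h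
  · set d := ⟪y - x, s⟫
    have hs : s ≠ 0 := by rintro rfl; simp [d] at h
    have hs' : 0 < ‖s‖ ^ 2 := by positivity
    set t := (r * d) / ‖s‖ ^ 2
    have hstep := relaxedProjHalfspace_sub_self_of_neg (r := r) h
    have hxp : ⟪x - p, s⟫ = -d + ⟪y - p, s⟫ := by
      rw [← inner_neg_left, ← inner_add_left, neg_sub, sub_add_sub_cancel]
    have hyp : 0 ≤ ⟪y - p, s⟫ := by rw [← neg_sub, inner_neg_left]; linarith
    have hts : t * ‖s‖ ^ 2 = r * d := div_mul_cancel₀ _ hs'.ne'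
    rw [show relaxedProjHalfspace r y s x - p = (x - p) + t • s by rw [← hstep]; abel,
      hstep, norm_add_sq_real, real_inner_smul_right, norm_smul, mul_pow, Real.norm_eq_abs,
      sq_abs, hxp]
    have ht0 : t ≤ 0 := div_nonpos_of_nonpos_of_nonneg (mul_nonpos_of_nonneg_of_nonpos hr h.le)
      hs'.le
    have hsq : t ^ 2 * ‖s‖ ^ 2 = t * (r * d) := by rw [← hts]; ring
    -- the two sides differ by `2 * r * t * ⟪y - p, s⟫ ≤ 0`
    nlinarith [mul_nonpos_of_nonneg_of_nonpos hr (mul_nonpos_of_nonpos_of_nonneg ht0 hyp)]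
  · simp [relaxedProjHalfspace_of_nonneg h]

theorem norm_relaxedProjHalfspace_sub_sq_add_le {ε : ℝ} (hε : 0 < ε) (hr : r ∈ Set.Icc ε (2 - ε))
    {p : X} (hp : ⟪p - y, s⟫ ≤ 0) :
    ‖relaxedProjHalfspace r y s x - p‖ ^ 2 + ε / 2 * ‖relaxedProjHalfspace r y s x - x‖ ^ 2
      ≤ ‖x - p‖ ^ 2 := by
  have h := mul_norm_relaxedProjHalfspace_sub_sq_le (x := x) (hε.le.trans hr.1) hp
  have hr0 : 0 < r := hε.trans_le hr.1
  refine le_of_mul_le_mul_left ?_ hr0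
  nlinarith [hr.2, sq_nonneg ‖relaxedProjHalfspace r y s x - x‖,
    mul_nonneg (mul_nonneg hr0.le hε.le) (sq_nonneg ‖relaxedProjHalfspace r y s x - x‖)]

theorem inv_norm_mul_inner_le (hr : 0 < r) (z : X) :
    ‖s‖⁻¹ * ⟪z - y, s⟫ ≤ ‖z - x‖ + ‖relaxedProjHalfspace r y s x - x‖ / r := by
  rcases eq_or_ne s 0 with rfl | hs
  · simp only [norm_zero, inv_zero, zero_mul]; positivity
  have hs' : 0 < ‖s‖ := norm_pos_iff.mpr hs
  have hsplit : ⟪z - y, s⟫ = ⟪z - x, s⟫ + ⟪x - y, s⟫ := by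
    rw [← inner_add_left, sub_add_sub_cancel]
  have h₁ : ⟪z - x, s⟫ ≤ ‖z - x‖ * ‖s‖ := real_inner_le_norm _ _
  have h₂ : ⟪x - y, s⟫ ≤ ‖relaxedProjHalfspace r y s x - x‖ / r * ‖s‖ := by
    rw [div_mul_eq_mul_div, le_div_iff₀ hr]
    exact inner_sub_mul_le_norm_relaxedProjHalfspace_sub_mul hr.le
  rw [inv_mul_le_iff₀ hs', hsplit]
  linarith

theorem tendsto_inv_norm_mul_inner_of_relaxedProjHalfspace {ε : ℝ} (hε : 0 < ε)
    {r : ℕ → ℝ} {x y s z : ℕ → X} (hr : ∀ n, ε ≤ r n)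
    (hx : ∀ n, x (n + 1) = relaxedProjHalfspace (r n) (y n) (s n) (x n))
    (hstep : Tendsto (fun n => ‖x (n + 1) - x n‖) atTop (𝓝 0))
    (hz : Tendsto (fun n => z n - x n) atTop (𝓝 0)) (hzy : ∀ n, 0 ≤ ⟪z n - y n, s n⟫) :
    Tendsto (fun n => ‖s n‖⁻¹ * ⟪z n - y n, s n⟫) atTop (𝓝 0) := by
  refine squeeze_zero (fun n => mul_nonneg (by positivity) (hzy n)) (fun n => ?_)
    (by simpa using hz.norm.add (hstep.div_const ε))
  rw [hx n]
  refine (inv_norm_mul_inner_le (x := x n) (hε.trans_le (hr n)) _).trans ?_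
  gcongr
  exact hr n

end RelaxedProjection

theorem nrmz_eq_inv_norm_smul {X : Type*} [NormedAddCommGroup X] [Module ℝ X] (u : X) :
    nrmz u = ‖u‖⁻¹ • u := by
  rcases eq_or_ne u 0 with rfl | hu
  · simp [nrmz]
  · simp [nrmz, hu]

theorem inner_nrmz_smul {X : Type*} [NormedAddCommGroup X] [InnerProductSpace ℝ X] {c : ℝ}
    (hc : 0 < c) (v s : X) : ⟪v, nrmz (c • s)⟫ = ‖s‖⁻¹ * ⟪v, s⟫ := by
  rw [nrmz_eq_inv_norm_smul, real_inner_smul_right, real_inner_smul_right, norm_smul,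
    Real.norm_eq_abs, abs_of_pos hc]
  field_simp

theorem stmt_0_general
    {X : Type*} [NormedAddCommGroup X] [InnerProductSpace ℝ X] [CompleteSpace X]
    (M : X → Set X)
    (hMmono : ∀ x y u v, u ∈ M x → v ∈ M y → (0:ℝ) ≤ ⟪x - y, u - v⟫)
    (hMmax : ∀ A : X → Set X,
      (∀ x y u v, u ∈ A x → v ∈ A y → (0:ℝ) ≤ ⟪x - y, u - v⟫) →
      (∀ x, M x ⊆ A x) → ∀ x, A x ⊆ M x)
    (hZ : ∃ z, (0:X) ∈ M z)
    (ε : ℝ) (hε : ε ∈ Set.Ioo (0:ℝ) 1)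
    (lam : ℕ → ℝ) (hlam : ∀ n, lam n ∈ Set.Icc ε (2 - ε))
    (γ : ℕ → ℝ) (hγ : ∀ n, ε ≤ γ n)
    (xt : ℕ → X) (K : ℕ → X → X)
    (hKmono : ∀ n x y, (0:ℝ) ≤ ⟪x - y, K n x - K n y⟫)
    (y ystar x : ℕ → X)
    (hy : ∀ n, (γ n)⁻¹ • (K n (xt n) - K n (y n)) ∈ M (y n))
    (hystar : ∀ n, ystar n = (γ n)⁻¹ • (K n (xt n) - K n (y n)))
    (hxrec : ∀ n, x (n + 1) =
      if ⟪y n - x n, ystar n⟫ < 0 then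
        x n + ((lam n * ⟪y n - x n, ystar n⟫) / ‖ystar n‖ ^ 2) • ystar n
      else x n) :
    Summable (fun n => ‖x (n + 1) - x n‖ ^ 2) ∧
    (Tendsto (fun n => xt n - x n) atTop (𝓝 (0:X)) →
      (Tendsto (fun n => ⟪xt n - y n, nrmz (K n (xt n) - K n (y n))⟫) atTop (𝓝 (0:ℝ)) →
        (∀ u : X, Tendsto (fun n => ⟪xt n - y n, u⟫) atTop (𝓝 (0:ℝ))) ∧
          Tendsto (fun n => K n (xt n) - K n (y n)) atTop (𝓝 (0:X))) →
      ∃ z, (0:X) ∈ M z ∧ ∀ u : X, Tendsto (fun n => ⟪x n, u⟫) atTop (𝓝 ⟪z, u⟫)) := by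
  obtain ⟨z₀, hz₀⟩ := hZ
  have hM : IsMaximalMonotone M := ⟨hMmono, hMmax⟩
  have hx : ∀ n, x (n + 1) = relaxedProjHalfspace (lam n) (y n) (ystar n) (x n) := hxrec
  have hγpos : ∀ n, 0 < γ n := fun n => hε.1.trans_le (hγ n)
  have hKs : ∀ n, K n (xt n) - K n (y n) = γ n • ystar n := fun n => by
    rw [hystar n, smul_inv_smul₀ (hγpos n).ne']
  have hyM : ∀ n, ystar n ∈ M (y n) := fun n => hystar n ▸ hy n
  have hxt_y : ∀ n, 0 ≤ ⟪xt n - y n, ystar n⟫ := fun n => by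
    have := hKmono n (xt n) (y n)
    rwa [hKs, real_inner_smul_right, mul_nonneg_iff_of_pos_left (hγpos n)] at this
  have hfejer : ∀ p ∈ {z | (0 : X) ∈ M z}, ∀ n,
      ‖x (n + 1) - p‖ ^ 2 + ε / 2 * ‖x (n + 1) - x n‖ ^ 2 ≤ ‖x n - p‖ ^ 2 := fun p hp n => by
    have hpH : ⟪p - y n, ystar n⟫ ≤ 0 := by
      have := hMmono _ _ _ _ (hyM n) hp
      rw [sub_zero] at this
      rw [← neg_sub, inner_neg_left]
      linarith
    rw [hx n]
    exact norm_relaxedProjHalfspace_sub_sq_add_le hε.1 (hlam n) hpH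
  have hF := IsFejerMonotone.of_norm_sub_sq_add_le (by linarith [hε.1]) hfejer
  have hsum := summable_norm_succ_sub_sq_of_add_le (by linarith [hε.1]) (hfejer z₀ hz₀)
  refine ⟨hsum, fun hxt hK => ?_⟩
  have hstep : Tendsto (fun n => ‖x (n + 1) - x n‖) atTop (𝓝 0) := by
    simpa using hsum.tendsto_atTop_zero.sqrt
  obtain ⟨hweak, hKlim⟩ := hK <| by
    simpa only [hKs, inner_nrmz_smul (hγpos _)] using
      tendsto_inv_norm_mul_inner_of_relaxedProjHalfspace hε.1 (fun n => (hlam n).1) hx hstep hxt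
        hxt_y
  have hys : Tendsto ystar atTop (𝓝 0) := by
    refine squeeze_zero_norm (fun n => ?_) (by simpa using hKlim.norm.const_mul ε⁻¹)
    rw [hKs, norm_smul, Real.norm_eq_abs, abs_of_pos (hγpos n), ← mul_assoc]
    exact le_mul_of_one_le_left (norm_nonneg _) (by rw [le_inv_mul_iff₀ hε.1]; simpa using hγ n)
  exact hF.exists_tendsto_inner ⟨z₀, hz₀⟩ fun U hU w hw =>
    hM.zero_mem_of_tendsto_inner hyM hxt_y (hF.norm_le hz₀) (hxt.mono_left hU)
      (fun u => (hweak u).mono_left hU) (hys.mono_left hU) hw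

/-- Theorem 4.2 (warped proximal iterations, weak convergence). -/
theorem stmt_0
    {X : Type*} [NormedAddCommGroup X] [InnerProductSpace ℝ X] [CompleteSpace X]
    (M : X → Set X)
    (hMmono : ∀ x y u v, u ∈ M x → v ∈ M y → (0:ℝ) ≤ ⟪x - y, u - v⟫)
    (hMmax : ∀ A : X → Set X,
      (∀ x y u v, u ∈ A x → v ∈ A y → (0:ℝ) ≤ ⟪x - y, u - v⟫) →
      (∀ x, M x ⊆ A x) → ∀ x, A x ⊆ M x)
    (hZ : ∃ z, (0:X) ∈ M z)
    (x₀ : X) (ε : ℝ) (hε : ε ∈ Set.Ioo (0:ℝ) 1)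
    (lam : ℕ → ℝ) (hlam : ∀ n, lam n ∈ Set.Icc ε (2 - ε))
    (γ : ℕ → ℝ) (hγ : ∀ n, ε ≤ γ n)
    (xt : ℕ → X) (K : ℕ → X → X)
    (hKmono : ∀ n x y, (0:ℝ) ≤ ⟪x - y, K n x - K n y⟫)
    (hKran : ∀ n x, ∃ p u, u ∈ M p ∧ K n x = K n p + γ n • u)
    (hKinj : ∀ n p q up uq, up ∈ M p → uq ∈ M q →
      K n p + γ n • up = K n q + γ n • uq → p = q)
    (y ystar x : ℕ → X)
    (hy : ∀ n, (γ n)⁻¹ • (K n (xt n) - K n (y n)) ∈ M (y n))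
    (hystar : ∀ n, ystar n = (γ n)⁻¹ • (K n (xt n) - K n (y n)))
    (hx0 : x 0 = x₀)
    (hxrec : ∀ n, x (n + 1) =
      if ⟪y n - x n, ystar n⟫ < 0 then
        x n + ((lam n * ⟪y n - x n, ystar n⟫) / ‖ystar n‖ ^ 2) • ystar n
      else x n) :
    Summable (fun n => ‖x (n + 1) - x n‖ ^ 2) ∧
    (Tendsto (fun n => xt n - x n) atTop (𝓝 (0:X)) →
      (Tendsto (fun n => ⟪xt n - y n, nrmz (K n (xt n) - K n (y n))⟫) atTop (𝓝 (0:ℝ)) →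
        (∀ u : X, Tendsto (fun n => ⟪xt n - y n, u⟫) atTop (𝓝 (0:ℝ))) ∧
          Tendsto (fun n => K n (xt n) - K n (y n)) atTop (𝓝 (0:X))) →
      ∃ z, (0:X) ∈ M z ∧ ∀ u : X, Tendsto (fun n => ⟪x n, u⟫) atTop (𝓝 ⟪z, u⟫)) :=
  stmt_0_general M hMmono hMmax hZ ε hε lam hlam γ hγ xt K hKmono y ystar x hy hystar hxrec
end

section
/- Let X be a real Hilbert space, let M : X → 2^X be a maximally monotone operator with Z = zer M ≠ ∅, let x₀ ∈ X, let ε ∈ (0,1), let (λ_n) be a sequence in [ε, 2−ε], and let (y_n, y_n*) be a sequence in gra M. Define x_{n+1} = x_n + λ_n (⟪y_n − x_n, y_n*⟫/‖y_n*‖²) y_n* if ⟪y_n − x_n, y_n*⟫ < 0, and x_{n+1} = x_n otherwise. Then: (i) Σ_{n∈ℕ} ‖x_{n+1} − x_n‖² < ∞; (ii) if every weak sequential cluster point of (x_n) belongs to Z, then (x_n) converges weakly to a point in Z. -/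
open Filter Topology RealInnerProductSpace

/-!
Every zero `w` of `M` satisfies `⟪y n - w, ystar n⟫ ≥ 0` by monotonicity, so it lies in the
half-space `{p | ⟪p - y n, ystar n⟫ ≤ 0}`, and `x (n + 1)` is the `lam n`-relaxed projection of
`x n` onto that half-space. Hence
`‖x (n + 1) - w‖² + ε / (2 - ε) ‖x (n + 1) - x n‖² ≤ ‖x n - w‖²`, which telescopes to (i) and
makes `x` Fejér monotone with respect to `zer M`. A Fejér monotone sequence is bounded, so it has
weak cluster points, and by Opial's argument it has at most one weak cluster point in `zer M`;
this gives (ii).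
-/

theorem summable_of_add_mul_le {a b : ℕ → ℝ} {κ : ℝ} (hκ : 0 < κ) (ha : ∀ n, 0 ≤ a n)
    (hb : ∀ n, 0 ≤ b n) (h : ∀ n, b (n + 1) + κ * a n ≤ b n) : Summable a := by
  refine summable_of_sum_range_le ha (c := b 0 / κ) fun n => ?_
  have htel : b n + κ * ∑ i ∈ Finset.range n, a i ≤ b 0 := by
    induction n with
    | zero => simp
    | succ n ih => rw [Finset.sum_range_succ, mul_add]; linarith [h n]
  rw [le_div_iff₀ hκ]
  linarith [hb n]

theorem div_two_sub_le_two_sub_div {ε l : ℝ} (hε : 0 < ε) (hl : l ∈ Set.Icc ε (2 - ε)) :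
    ε / (2 - ε) ≤ (2 - l) / l := by
  obtain ⟨hεl, hl2⟩ := hl
  rw [div_le_div_iff₀ (by linarith) (by linarith)]
  nlinarith

section Fejer

variable {X : Type*} [NormedAddCommGroup X]

def FejerMonotone (x : ℕ → X) (C : Set X) : Prop :=
  ∀ z ∈ C, ∀ n, ‖x (n + 1) - z‖ ≤ ‖x n - z‖

variable {x : ℕ → X} {C : Set X} {z : X}

theorem FejerMonotone.antitone_norm_sub (hx : FejerMonotone x C) (hz : z ∈ C) :
    Antitone fun n => ‖x n - z‖ :=
  antitone_nat_of_succ_le (hx z hz)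

theorem FejerMonotone.exists_tendsto_norm_sub (hx : FejerMonotone x C) (hz : z ∈ C) :
    ∃ a, Tendsto (fun n => ‖x n - z‖) atTop (𝓝 a) :=
  ⟨_, tendsto_atTop_ciInf (hx.antitone_norm_sub hz) ⟨0, by rintro _ ⟨n, rfl⟩; positivity⟩⟩

theorem FejerMonotone.norm_le (hx : FejerMonotone x C) (hz : z ∈ C) (n : ℕ) :
    ‖x n‖ ≤ ‖x 0 - z‖ + ‖z‖ :=
  calc ‖x n‖ = ‖(x n - z) + z‖ := by rw [sub_add_cancel]
    _ ≤ ‖x n - z‖ + ‖z‖ := norm_add_le _ _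
    _ ≤ ‖x 0 - z‖ + ‖z‖ := by
      gcongr
      exact hx.antitone_norm_sub hz (Nat.zero_le n)

theorem FejerMonotone.of_sq_add_le {κ : ℝ} (hκ : 0 ≤ κ)
    (h : ∀ z ∈ C, ∀ n, ‖x (n + 1) - z‖ ^ 2 + κ * ‖x (n + 1) - x n‖ ^ 2 ≤ ‖x n - z‖ ^ 2) :
    FejerMonotone x C := by
  intro z hz n
  have hsq : ‖x (n + 1) - z‖ ^ 2 ≤ ‖x n - z‖ ^ 2 := by
    nlinarith [h z hz n, sq_nonneg ‖x (n + 1) - x n‖]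
  exact (pow_le_pow_iff_left₀ (norm_nonneg _) (norm_nonneg _) two_ne_zero).mp hsq

end Fejer

section Hilbert

variable {X : Type*} [NormedAddCommGroup X] [InnerProductSpace ℝ X]

def IsWeakLimit (v : ℕ → X) (z : X) : Prop :=
  ∀ u : X, Tendsto (fun n => ⟪v n, u⟫) atTop (𝓝 ⟪z, u⟫)

/-- Sequential Banach–Alaoglu in a Hilbert space, obtained from the separable version applied to
the dual of the closed span of the sequence and transported back by the Riesz isomorphism. -/
theorem exists_strictMono_isWeakLimit_comp [CompleteSpace X] {v : ℕ → X} {R : ℝ}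
    (hv : ∀ n, ‖v n‖ ≤ R) : ∃ z, ∃ φ : ℕ → ℕ, StrictMono φ ∧ IsWeakLimit (v ∘ φ) z := by
  set Y := (Submodule.span ℝ (Set.range v)).topologicalClosure
  have hvY : ∀ n, v n ∈ Y :=
    fun n => Submodule.le_topologicalClosure _ (Submodule.subset_span ⟨n, rfl⟩)
  have : TopologicalSpace.SeparableSpace Y :=
    ((Set.countable_range v).isSeparable.span.closure).separableSpace
  let w : ℕ → WeakDual ℝ Y :=
    fun n => StrongDual.toWeakDual (InnerProductSpace.toDual ℝ Y ⟨v n, hvY n⟩)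
  have hw : ∀ n, w n ∈ WeakDual.toStrongDual ⁻¹' Metric.closedBall 0 R := fun n => by
    refine (dist_zero_right (InnerProductSpace.toDual ℝ Y ⟨v n, hvY n⟩)).trans_le ?_
    simpa using hv n
  obtain ⟨F, -, φ, hφ, hF⟩ := WeakDual.isSeqCompact_closedBall ℝ Y 0 R hw
  refine ⟨(InnerProductSpace.toDual ℝ Y).symm (WeakDual.toStrongDual F), φ, hφ, fun u => ?_⟩
  have hFu := ((WeakDual.eval_continuous (Y.orthogonalProjectionOnto u)).tendsto F).comp hF
  rw [← Submodule.inner_orthogonalProjectionOnto_eq_of_mem_left,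
    InnerProductSpace.toDual_symm_apply]
  simpa [w, Function.comp_def] using hFu

/-- Opial's argument: `2 ⟪x n, p - q⟫` is a combination of `‖x n - p‖²` and `‖x n - q‖²`, so it
converges, and its limit computed along the two subsequences gives `⟪p - q, p - q⟫ = 0`. -/
theorem eq_of_isWeakLimit_of_tendsto_norm_sub {x : ℕ → X} {p q : X} {a b : ℝ}
    (hp : Tendsto (fun n => ‖x n - p‖) atTop (𝓝 a))
    (hq : Tendsto (fun n => ‖x n - q‖) atTop (𝓝 b))
    {φ ψ : ℕ → ℕ} (hφ : Tendsto φ atTop atTop) (hψ : Tendsto ψ atTop atTop)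
    (hpφ : IsWeakLimit (x ∘ φ) p) (hqψ : IsWeakLimit (x ∘ ψ) q) : p = q := by
  have hpolar : ∀ n, ⟪x n, p - q⟫ = (‖x n - q‖ ^ 2 - ‖x n - p‖ ^ 2 + ‖p‖ ^ 2 - ‖q‖ ^ 2) / 2 := by
    intro n
    rw [norm_sub_sq_real, norm_sub_sq_real, inner_sub_right]
    ring
  have hT : Tendsto (fun n => ⟪x n, p - q⟫) atTop
      (𝓝 ((b ^ 2 - a ^ 2 + ‖p‖ ^ 2 - ‖q‖ ^ 2) / 2)) := by
    simp only [hpolar]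
    exact ((((hq.pow 2).sub (hp.pow 2)).add_const _).sub_const _).div_const 2
  have hpL := tendsto_nhds_unique (hpφ (p - q)) (hT.comp hφ)
  have hqL := tendsto_nhds_unique (hqψ (p - q)) (hT.comp hψ)
  rw [← sub_eq_zero, ← inner_self_eq_zero (𝕜 := ℝ), inner_sub_left, hpL, hqL, sub_self]

theorem FejerMonotone.exists_isWeakLimit [CompleteSpace X] {x : ℕ → X} {C : Set X}
    (hx : FejerMonotone x C) (hC : C.Nonempty)
    (hclus : ∀ (z : X) (φ : ℕ → ℕ), StrictMono φ → IsWeakLimit (x ∘ φ) z → z ∈ C) :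
    ∃ z ∈ C, IsWeakLimit x z := by
  obtain ⟨z₀, hz₀⟩ := hC
  have hbdd := hx.norm_le hz₀
  have huniq : ∀ p q (φ ψ : ℕ → ℕ), StrictMono φ → StrictMono ψ →
      IsWeakLimit (x ∘ φ) p → IsWeakLimit (x ∘ ψ) q → p = q := by
    intro p q φ ψ hφ hψ hp hq
    obtain ⟨a, ha⟩ := hx.exists_tendsto_norm_sub (hclus p φ hφ hp)
    obtain ⟨b, hb⟩ := hx.exists_tendsto_norm_sub (hclus q ψ hψ hq)
    exact eq_of_isWeakLimit_of_tendsto_norm_sub ha hb hφ.tendsto_atTop hψ.tendsto_atTop hp hq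
  obtain ⟨p, φ, hφ, hp⟩ := exists_strictMono_isWeakLimit_comp hbdd
  refine ⟨p, hclus p φ hφ hp, fun u => tendsto_of_subseq_tendsto fun ns hns => ?_⟩
  obtain ⟨σ, -, hnsσ⟩ := strictMono_subseq_of_tendsto_atTop hns
  obtain ⟨q, τ, hτ, hq⟩ := exists_strictMono_isWeakLimit_comp fun n => hbdd (ns (σ n))
  have hqp : q = p := huniq q p (ns ∘ σ ∘ τ) φ (hnsσ.comp hτ) hφ hq hp
  exact ⟨σ ∘ τ, hqp ▸ hq u⟩

/-- The `lam`-relaxed projection of `x` onto the half-space `{p | ⟪p - y, s⟫ ≤ 0}`. -/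
noncomputable def relaxedHalfspaceProj (lam : ℝ) (y s x : X) : X :=
  if ⟪y - x, s⟫ < 0 then x + ((lam * ⟪y - x, s⟫) / ‖s‖ ^ 2) • s else x

theorem norm_relaxedHalfspaceProj_sub_sq_add_le {lam : ℝ} {y s x w : X} (hlam : 0 < lam)
    (hw : 0 ≤ ⟪y - w, s⟫) :
    ‖relaxedHalfspaceProj lam y s x - w‖ ^ 2
      + (2 - lam) / lam * ‖relaxedHalfspaceProj lam y s x - x‖ ^ 2 ≤ ‖x - w‖ ^ 2 := by
  unfold relaxedHalfspaceProj
  split_ifs with hc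
  swap
  · simp
  have hs : 0 < ‖s‖ ^ 2 := by
    have : s ≠ 0 := by rintro rfl; simp at hc
    positivity
  set t := (lam * ⟪y - x, s⟫) / ‖s‖ ^ 2
  have ht : t < 0 := div_neg_of_neg_of_pos (mul_neg_of_pos_of_neg hlam hc) hs
  -- `t ‖s‖² = lam ⟪y - x, s⟫` turns the quadratic term into `2 t ⟪y - x, s⟫`.
  have hquad : ‖t • s‖ ^ 2 + (2 - lam) / lam * ‖t • s‖ ^ 2 = 2 * t * ⟪y - x, s⟫ := by
    rw [norm_smul, mul_pow, Real.norm_eq_abs, sq_abs]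
    simp only [t]
    field_simp
    ring
  have hsplit : ⟪x - w, s⟫ + ⟪y - x, s⟫ = ⟪y - w, s⟫ := by
    rw [← inner_add_left, sub_add_sub_cancel']
  calc ‖x + t • s - w‖ ^ 2 + (2 - lam) / lam * ‖x + t • s - x‖ ^ 2
      = ‖x - w‖ ^ 2 + 2 * t * ⟪y - w, s⟫ := by
        rw [add_sub_cancel_left, add_sub_right_comm, norm_add_sq_real, real_inner_smul_right,
          add_assoc, hquad, ← hsplit]
        ring
    _ ≤ ‖x - w‖ ^ 2 := by nlinarith

end Hilbert

theorem stmt_2_general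
    {X : Type*} [NormedAddCommGroup X] [InnerProductSpace ℝ X] [CompleteSpace X]
    (M : X → Set X)
    (hMmono : ∀ x y u v, u ∈ M x → v ∈ M y → (0:ℝ) ≤ ⟪x - y, u - v⟫)
    (hZ : ∃ z, (0:X) ∈ M z)
    (ε : ℝ) (hε : ε ∈ Set.Ioo (0:ℝ) 1)
    (lam : ℕ → ℝ) (hlam : ∀ n, lam n ∈ Set.Icc ε (2 - ε))
    (y ystar x : ℕ → X)
    (hgra : ∀ n, ystar n ∈ M (y n))
    (hxrec : ∀ n, x (n + 1) =
      if ⟪y n - x n, ystar n⟫ < 0 then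
        x n + ((lam n * ⟪y n - x n, ystar n⟫) / ‖ystar n‖ ^ 2) • ystar n
      else x n) :
    Summable (fun n => ‖x (n + 1) - x n‖ ^ 2) ∧
    ((∀ (z : X) (φ : ℕ → ℕ), StrictMono φ →
        (∀ u : X, Tendsto (fun n => ⟪x (φ n), u⟫) atTop (𝓝 ⟪z, u⟫)) → (0:X) ∈ M z) →
      ∃ z, (0:X) ∈ M z ∧ ∀ u : X, Tendsto (fun n => ⟪x n, u⟫) atTop (𝓝 ⟪z, u⟫)) := by
  obtain ⟨hε0, hε1⟩ := hε
  have hκ : 0 < ε / (2 - ε) := div_pos hε0 (by linarith)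
  have hfejer : ∀ w ∈ {z | (0:X) ∈ M z}, ∀ n,
      ‖x (n + 1) - w‖ ^ 2 + ε / (2 - ε) * ‖x (n + 1) - x n‖ ^ 2 ≤ ‖x n - w‖ ^ 2 := by
    intro w hw n
    have hw' : 0 ≤ ⟪y n - w, ystar n⟫ := by simpa using hMmono _ _ _ _ (hgra n) hw
    have hlam0 : 0 < lam n := hε0.trans_le (hlam n).1
    have hstep : x (n + 1) = relaxedHalfspaceProj (lam n) (y n) (ystar n) (x n) := hxrec n
    rw [hstep]
    refine le_trans ?_ (norm_relaxedHalfspaceProj_sub_sq_add_le hlam0 hw')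
    gcongr _ + ?_ * _
    exact div_two_sub_le_two_sub_div hε0 (hlam n)
  obtain ⟨z₀, hz₀⟩ := hZ
  refine ⟨summable_of_add_mul_le (b := fun n => ‖x n - z₀‖ ^ 2) hκ (fun _ => by positivity)
    (fun _ => by positivity) (hfejer z₀ hz₀), fun hclus => ?_⟩
  exact (FejerMonotone.of_sq_add_le hκ.le hfejer).exists_isWeakLimit ⟨z₀, hz₀⟩ hclus

/-- Proposition 4.1 (abstract weak convergence principle). -/
theorem stmt_2
    {X : Type*} [NormedAddCommGroup X] [InnerProductSpace ℝ X] [CompleteSpace X]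
    (M : X → Set X)
    (hMmono : ∀ x y u v, u ∈ M x → v ∈ M y → (0:ℝ) ≤ ⟪x - y, u - v⟫)
    (hMmax : ∀ A : X → Set X,
      (∀ x y u v, u ∈ A x → v ∈ A y → (0:ℝ) ≤ ⟪x - y, u - v⟫) →
      (∀ x, M x ⊆ A x) → ∀ x, A x ⊆ M x)
    (hZ : ∃ z, (0:X) ∈ M z)
    (x₀ : X) (ε : ℝ) (hε : ε ∈ Set.Ioo (0:ℝ) 1)
    (lam : ℕ → ℝ) (hlam : ∀ n, lam n ∈ Set.Icc ε (2 - ε))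
    (y ystar x : ℕ → X)
    (hgra : ∀ n, ystar n ∈ M (y n))
    (hx0 : x 0 = x₀)
    (hxrec : ∀ n, x (n + 1) =
      if ⟪y n - x n, ystar n⟫ < 0 then
        x n + ((lam n * ⟪y n - x n, ystar n⟫) / ‖ystar n‖ ^ 2) • ystar n
      else x n) :
    Summable (fun n => ‖x (n + 1) - x n‖ ^ 2) ∧
    ((∀ (z : X) (φ : ℕ → ℕ), StrictMono φ →
        (∀ u : X, Tendsto (fun n => ⟪x (φ n), u⟫) atTop (𝓝 ⟪z, u⟫)) → (0:X) ∈ M z) →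
      ∃ z, (0:X) ∈ M z ∧ ∀ u : X, Tendsto (fun n => ⟪x n, u⟫) atTop (𝓝 ⟪z, u⟫)) :=
  stmt_2_general M hMmono hZ ε hε lam hlam y ystar x hgra hxrec
end

section
/- Let X be a real Hilbert space, let M : X → 2^X be a maximally monotone operator with Z = zer M ≠ ∅, let x₀ ∈ X, and let (y_n, y_n*) be a sequence in gra M. For every n set x_{n+1/2} = x_n + (⟪y_n − x_n, y_n*⟫/‖y_n*‖²) y_n* if ⟪y_n − x_n, y_n*⟫ < 0 and x_{n+1/2} = x_n otherwise, and x_{n+1} = Q(x₀, x_n, x_{n+1/2}), the projection of x₀ onto H(x₀,x_n) ∩ H(x_n,x_{n+1/2}). Then: (i) Σ_n ‖x_{n+1} − x_n‖² < ∞ and Σ_n ‖x_{n+1/2} − x_n‖² < ∞; (ii) if every weak sequential cluster point of (x_n) belongs to Z, then (x_n) converges strongly to proj_Z x₀, the point of Z nearest x₀. -/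
open Filter Topology RealInnerProductSpace

/-!
Every zero `z` of `M` satisfies `⟪y n - z, ystar n⟫ ≥ 0` by monotonicity, hence lies in the
half-space `H(x n, xh n)`; by induction it also lies in `H(x₀, x n)`, so it competes in every
projection and `‖x₀ - x n‖ ≤ ‖x₀ - z‖`. Since `x (n+1) ∈ H(x₀, x n)`, Pythagoras gives
`‖x₀ - x n‖² + ‖x (n+1) - x n‖² ≤ ‖x₀ - x (n+1)‖²`, so the squared steps telescope to a bounded
sum. For (ii), a weak cluster point `z` is a zero; weak lower semicontinuity of the norm forces
`‖x₀ - x n‖ ↑ ‖x₀ - z‖`, and `‖z - x n‖² ≤ ‖x₀ - z‖² - ‖x₀ - x n‖² → 0`.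
-/

/-- The half-space `H(x,y) = {u : ⟪u - y, x - y⟫ ≤ 0}`. -/
def Hset {X : Type*} [NormedAddCommGroup X] [InnerProductSpace ℝ X] (x y : X) : Set X :=
  {u | ⟪u - y, x - y⟫ ≤ 0}

section Hilbert

variable {X : Type*} [NormedAddCommGroup X] [InnerProductSpace ℝ X]

theorem sq_norm_sub_add_sq_norm_sub_le_of_mem_Hset {a b c : X} (h : c ∈ Hset a b) :
    ‖a - b‖ ^ 2 + ‖c - b‖ ^ 2 ≤ ‖a - c‖ ^ 2 := by
  have h' : ⟪c - b, a - b⟫ ≤ 0 := h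
  rw [show a - c = (a - b) - (c - b) by abel, norm_sub_sq_real (a - b) (c - b), real_inner_comm]
  linarith

theorem convex_Hset (x y : X) : Convex ℝ (Hset x y) := by
  have : Hset x y = {u | ⟪x - y, u⟫ ≤ ⟪x - y, y⟫} := by
    ext u
    rw [Hset, Set.mem_ofPred_eq, Set.mem_ofPred_eq, real_inner_comm, inner_sub_right, sub_nonpos]
  rw [this]
  exact convex_halfSpace_le (innerₛₗ ℝ (x - y)).isLinear _

theorem mem_Hset_of_isMinOn {K : Set X} (hK : Convex ℝ K) {x₀ p w : X} (hp : p ∈ K)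
    (hmin : IsMinOn (‖x₀ - ·‖) K p) (hw : w ∈ K) : w ∈ Hset x₀ p := by
  have : Nonempty K := ⟨⟨p, hp⟩⟩
  have heq : ‖x₀ - p‖ = ⨅ w : K, ‖x₀ - w‖ :=
    le_antisymm (le_ciInf fun w => isMinOn_iff.1 hmin w w.2)
      (ciInf_le ⟨0, Set.forall_mem_range.2 fun _ => norm_nonneg _⟩ (⟨p, hp⟩ : K))
  have := (norm_eq_iInf_iff_real_inner_le_zero hK hp).1 heq w hw
  rwa [Hset, Set.mem_ofPred_eq, real_inner_comm]

theorem mem_Hset_ite_of_inner_nonneg {x y s z : X} (hz : 0 ≤ ⟪y - z, s⟫) :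
    z ∈ Hset x (if ⟪y - x, s⟫ < 0 then x + (⟪y - x, s⟫ / ‖s‖ ^ 2) • s else x) := by
  split_ifs with h
  · have hs : s ≠ 0 := by
      rintro rfl
      simp at h
    set t := ⟪y - x, s⟫ / ‖s‖ ^ 2
    have ht : t < 0 := div_neg_of_neg_of_pos h (by positivity)
    have hts : t * ‖s‖ ^ 2 = ⟪y - x, s⟫ := div_mul_cancel₀ _ (by positivity)
    show ⟪z - (x + t • s), x - (x + t • s)⟫ ≤ 0
    calc ⟪z - (x + t • s), x - (x + t • s)⟫ = -t * (⟪z - x, s⟫ - t * ‖s‖ ^ 2) := by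
          rw [sub_add_eq_sub_sub, sub_add_cancel_left]
          simp only [inner_neg_right, inner_sub_left, real_inner_smul_right,
            real_inner_self_eq_norm_sq, norm_smul, Real.norm_eq_abs, mul_pow, sq_abs]
          ring
      _ = t * ⟪y - z, s⟫ := by
          rw [hts, ← inner_sub_left, show z - x - (y - x) = -(y - z) by abel, inner_neg_left]
          ring
      _ ≤ 0 := mul_nonpos_of_nonpos_of_nonneg ht.le hz
  · show ⟪z - x, x - x⟫ ≤ 0
    simp

theorem norm_sub_le_of_forall_tendsto_inner {b : ℕ → X} {x₀ z : X} {r : ℝ}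
    (hb : ∀ u, Tendsto (fun n => ⟪b n, u⟫) atTop (𝓝 ⟪z, u⟫)) (hr : ∀ n, ‖x₀ - b n‖ ≤ r) :
    ‖x₀ - z‖ ≤ r := by
  have hlim : Tendsto (fun n => ⟪x₀ - b n, x₀ - z⟫) atTop (𝓝 (‖x₀ - z‖ ^ 2)) := by
    rw [← real_inner_self_eq_norm_sq]
    simpa only [inner_sub_left] using (tendsto_const_nhds (x := ⟪x₀, x₀ - z⟫)).sub (hb (x₀ - z))
  have hsq : ‖x₀ - z‖ ^ 2 ≤ r * ‖x₀ - z‖ := le_of_tendsto' hlim fun n =>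
    (real_inner_le_norm _ _).trans (mul_le_mul_of_nonneg_right (hr n) (norm_nonneg _))
  nlinarith [norm_nonneg (x₀ - z), (norm_nonneg (x₀ - b 0)).trans (hr 0)]

theorem tendsto_of_forall_mem_Hset {x : ℕ → X} {x₀ z : X} (hz : ∀ n, z ∈ Hset x₀ (x n))
    (hd : Tendsto (fun n => ‖x₀ - x n‖) atTop (𝓝 ‖x₀ - z‖)) : Tendsto x atTop (𝓝 z) := by
  have hsq : Tendsto (fun n => ‖z - x n‖ ^ 2) atTop (𝓝 0) := by
    refine squeeze_zero (fun n => by positivity)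
      (fun n => le_sub_iff_add_le'.2 (sq_norm_sub_add_sq_norm_sub_le_of_mem_Hset (hz n))) ?_
    rw [← sub_self (‖x₀ - z‖ ^ 2)]
    exact tendsto_const_nhds.sub (hd.pow 2)
  rw [tendsto_iff_norm_sub_tendsto_zero]
  simpa [norm_sub_rev, Real.sqrt_sq (norm_nonneg _)] using hsq.sqrt

/-- Sequential Banach–Alaoglu in the separable closed span `Y` of the sequence, transported back to
`X` through the orthogonal projection onto `Y`. -/
theorem exists_strictMono_forall_tendsto_inner [CompleteSpace X] {a : ℕ → X} {C : ℝ}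
    (hC : ∀ n, ‖a n‖ ≤ C) :
    ∃ (z : X) (φ : ℕ → ℕ), StrictMono φ ∧
      ∀ u : X, Tendsto (fun n => ⟪a (φ n), u⟫) atTop (𝓝 ⟪z, u⟫) := by
  set Y := (Submodule.span ℝ (Set.range a)).topologicalClosure
  have haY : ∀ n, a n ∈ Y := fun n =>
    Submodule.le_topologicalClosure _ (Submodule.subset_span ⟨n, rfl⟩)
  have : TopologicalSpace.SeparableSpace Y :=
    ((Set.countable_range a).isSeparable.span.closure).separableSpace
  let f : ℕ → WeakDual ℝ Y := fun n =>
    StrongDual.toWeakDual (InnerProductSpace.toDual ℝ Y ⟨a n, haY n⟩)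
  have hf : ∀ n, f n ∈ WeakDual.toStrongDual ⁻¹' Metric.closedBall 0 C := fun n =>
    (dist_zero_right _).trans_le (((InnerProductSpace.toDual ℝ Y).norm_map _).trans_le (hC n))
  obtain ⟨g, -, φ, hφ, hfg⟩ := WeakDual.isSeqCompact_closedBall ℝ Y 0 C hf
  refine ⟨(InnerProductSpace.toDual ℝ Y).symm (WeakDual.toStrongDual g), φ, hφ, fun u => ?_⟩
  have hproj : ∀ v : Y, ⟪(v : X), u⟫ = ⟪v, Y.orthogonalProjectionOnto u⟫ := fun v => by
    rw [Submodule.coe_inner, ← Submodule.starProjection_apply,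
      ← Submodule.inner_starProjection_left_eq_right,
      Submodule.starProjection_eq_self_iff.2 v.2]
  rw [hproj, InnerProductSpace.toDual_symm_apply]
  simp_rw [fun n => hproj ⟨a n, haY n⟩]
  exact ((WeakDual.eval_continuous _).tendsto g).comp hfg

/-- `p = Q(x₀, x, xh)` in the notation of the paper. -/
def IsHaugazeauPoint (x₀ x xh p : X) : Prop :=
  p ∈ Hset x₀ x ∩ Hset x xh ∧ IsMinOn (‖x₀ - ·‖) (Hset x₀ x ∩ Hset x xh) p

namespace IsHaugazeauPoint

variable {x₀ x xh p : X}

theorem mem_Hset (h : IsHaugazeauPoint x₀ x xh p) {w : X} (hw : w ∈ Hset x₀ x ∩ Hset x xh) :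
    w ∈ Hset x₀ p :=
  mem_Hset_of_isMinOn ((convex_Hset _ _).inter (convex_Hset _ _)) h.1 h.2 hw

theorem sq_norm_sub_add_sq_norm_sub_le (h : IsHaugazeauPoint x₀ x xh p) :
    ‖x₀ - x‖ ^ 2 + ‖p - x‖ ^ 2 ≤ ‖x₀ - p‖ ^ 2 :=
  sq_norm_sub_add_sq_norm_sub_le_of_mem_Hset h.1.1

theorem sq_norm_sub_le (h : IsHaugazeauPoint x₀ x xh p) : ‖xh - x‖ ^ 2 ≤ ‖p - x‖ ^ 2 := by
  have := sq_norm_sub_add_sq_norm_sub_le_of_mem_Hset h.1.2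
  rw [norm_sub_rev x xh, norm_sub_rev x p] at this
  nlinarith [norm_nonneg (p - xh)]

end IsHaugazeauPoint

section HaugazeauSequence

variable {x₀ z : X} {x xh : ℕ → X}

theorem mem_Hset_of_isHaugazeauPoint (hx0 : x 0 = x₀)
    (hQ : ∀ n, IsHaugazeauPoint x₀ (x n) (xh n) (x (n + 1)))
    (hz : ∀ n, z ∈ Hset (x n) (xh n)) (n : ℕ) : z ∈ Hset x₀ (x n) := by
  induction n with
  | zero => simp [Hset, hx0]
  | succ n ih => exact (hQ n).mem_Hset ⟨ih, hz n⟩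

theorem norm_sub_le_of_isHaugazeauPoint (hx0 : x 0 = x₀)
    (hQ : ∀ n, IsHaugazeauPoint x₀ (x n) (xh n) (x (n + 1)))
    (hz : ∀ n, z ∈ Hset (x n) (xh n)) (n : ℕ) : ‖x₀ - x n‖ ≤ ‖x₀ - z‖ := by
  cases n with
  | zero => simp [hx0]
  | succ n =>
    exact isMinOn_iff.1 (hQ n).2 z ⟨mem_Hset_of_isHaugazeauPoint hx0 hQ hz n, hz n⟩

theorem monotone_norm_sub_of_isHaugazeauPoint
    (hQ : ∀ n, IsHaugazeauPoint x₀ (x n) (xh n) (x (n + 1))) :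
    Monotone fun n => ‖x₀ - x n‖ := by
  refine monotone_nat_of_le_succ fun n => ?_
  rw [← pow_le_pow_iff_left₀ (norm_nonneg _) (norm_nonneg _) two_ne_zero]
  linarith [(hQ n).sq_norm_sub_add_sq_norm_sub_le, sq_nonneg ‖x (n + 1) - x n‖]

theorem summable_sq_norm_succ_sub_of_isHaugazeauPoint (hx0 : x 0 = x₀)
    (hQ : ∀ n, IsHaugazeauPoint x₀ (x n) (xh n) (x (n + 1)))
    (hz : ∀ n, z ∈ Hset (x n) (xh n)) : Summable fun n => ‖x (n + 1) - x n‖ ^ 2 := by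
  refine summable_of_sum_range_le (c := ‖x₀ - z‖ ^ 2) (fun n => by positivity) fun n => ?_
  have htele : ∑ k ∈ Finset.range n, ‖x (k + 1) - x k‖ ^ 2 ≤ ‖x₀ - x n‖ ^ 2 := by
    induction n with
    | zero => simp
    | succ n ih =>
      rw [Finset.sum_range_succ]
      linarith [(hQ n).sq_norm_sub_add_sq_norm_sub_le]
  exact htele.trans (pow_le_pow_left₀ (norm_nonneg _)
    (norm_sub_le_of_isHaugazeauPoint hx0 hQ hz n) 2)

theorem tendsto_of_isHaugazeauPoint (hx0 : x 0 = x₀)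
    (hQ : ∀ n, IsHaugazeauPoint x₀ (x n) (xh n) (x (n + 1)))
    (hz : ∀ n, z ∈ Hset (x n) (xh n)) {φ : ℕ → ℕ}
    (hweak : ∀ u, Tendsto (fun n => ⟪x (φ n), u⟫) atTop (𝓝 ⟪z, u⟫)) :
    Tendsto x atTop (𝓝 z) := by
  set d := fun n => ‖x₀ - x n‖
  have hbdd : BddAbove (Set.range d) :=
    ⟨‖x₀ - z‖, Set.forall_mem_range.2 (norm_sub_le_of_isHaugazeauPoint hx0 hQ hz)⟩
  have hd : Tendsto d atTop (𝓝 (⨆ n, d n)) :=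
    tendsto_atTop_ciSup (monotone_norm_sub_of_isHaugazeauPoint hQ) hbdd
  have hsup : ⨆ n, d n = ‖x₀ - z‖ :=
    le_antisymm (ciSup_le (norm_sub_le_of_isHaugazeauPoint hx0 hQ hz))
      (norm_sub_le_of_forall_tendsto_inner hweak fun n => le_ciSup hbdd (φ n))
  rw [hsup] at hd
  exact tendsto_of_forall_mem_Hset (mem_Hset_of_isHaugazeauPoint hx0 hQ hz) hd

end HaugazeauSequence

end Hilbert

theorem stmt_3_general
    {X : Type*} [NormedAddCommGroup X] [InnerProductSpace ℝ X] [CompleteSpace X]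
    (M : X → Set X)
    (hMmono : ∀ x y u v, u ∈ M x → v ∈ M y → (0:ℝ) ≤ ⟪x - y, u - v⟫)
    (hZ : ∃ z, (0:X) ∈ M z)
    (x₀ : X) (y ystar x xh : ℕ → X)
    (hgra : ∀ n, ystar n ∈ M (y n))
    (hx0 : x 0 = x₀)
    (hxh : ∀ n, xh n =
      if ⟪y n - x n, ystar n⟫ < 0 then
        x n + (⟪y n - x n, ystar n⟫ / ‖ystar n‖ ^ 2) • ystar n
      else x n)
    (hQ : ∀ n, x (n + 1) ∈ Hset x₀ (x n) ∩ Hset (x n) (xh n) ∧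
      ∀ w ∈ Hset x₀ (x n) ∩ Hset (x n) (xh n), ‖x₀ - x (n + 1)‖ ≤ ‖x₀ - w‖) :
    (Summable (fun n => ‖x (n + 1) - x n‖ ^ 2) ∧
      Summable (fun n => ‖xh n - x n‖ ^ 2)) ∧
    ((∀ (z : X) (φ : ℕ → ℕ), StrictMono φ →
        (∀ u : X, Tendsto (fun n => ⟪x (φ n), u⟫) atTop (𝓝 ⟪z, u⟫)) → (0:X) ∈ M z) →
      ∃ z, (0:X) ∈ M z ∧ (∀ w, (0:X) ∈ M w → ‖x₀ - z‖ ≤ ‖x₀ - w‖) ∧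
        Tendsto x atTop (𝓝 z)) := by
  obtain ⟨z₀, hz₀⟩ := hZ
  have hQ' : ∀ n, IsHaugazeauPoint x₀ (x n) (xh n) (x (n + 1)) :=
    fun n => ⟨(hQ n).1, isMinOn_iff.2 (hQ n).2⟩
  have hzer : ∀ z, (0:X) ∈ M z → ∀ n, z ∈ Hset (x n) (xh n) := fun z hz n => by
    rw [hxh n]
    exact mem_Hset_ite_of_inner_nonneg (by simpa using hMmono _ _ _ _ (hgra n) hz)
  have hsum := summable_sq_norm_succ_sub_of_isHaugazeauPoint hx0 hQ' (hzer z₀ hz₀)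
  refine ⟨⟨hsum, hsum.of_nonneg_of_le (fun n => by positivity) fun n => (hQ' n).sq_norm_sub_le⟩,
    fun hcluster => ?_⟩
  obtain ⟨z, φ, hφ, hweak⟩ :=
    exists_strictMono_forall_tendsto_inner (a := x) (C := ‖x₀‖ + ‖x₀ - z₀‖) fun n => by
      linarith [norm_le_norm_add_norm_sub x₀ (x n),
        norm_sub_le_of_isHaugazeauPoint hx0 hQ' (hzer z₀ hz₀) n]
  have hz := hcluster z φ hφ hweak
  have hlim := tendsto_of_isHaugazeauPoint hx0 hQ' (hzer z hz) hweak
  refine ⟨z, hz, fun w hw => ?_, hlim⟩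
  exact le_of_tendsto (tendsto_const_nhds.sub hlim).norm
    (Eventually.of_forall (norm_sub_le_of_isHaugazeauPoint hx0 hQ' (hzer w hw)))

/-- Proposition 4.8 (abstract strong convergence principle, Haugazeau-type). -/
theorem stmt_3
    {X : Type*} [NormedAddCommGroup X] [InnerProductSpace ℝ X] [CompleteSpace X]
    (M : X → Set X)
    (hMmono : ∀ x y u v, u ∈ M x → v ∈ M y → (0:ℝ) ≤ ⟪x - y, u - v⟫)
    (hMmax : ∀ A : X → Set X,
      (∀ x y u v, u ∈ A x → v ∈ A y → (0:ℝ) ≤ ⟪x - y, u - v⟫) →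
      (∀ x, M x ⊆ A x) → ∀ x, A x ⊆ M x)
    (hZ : ∃ z, (0:X) ∈ M z)
    (x₀ : X) (y ystar x xh : ℕ → X)
    (hgra : ∀ n, ystar n ∈ M (y n))
    (hx0 : x 0 = x₀)
    (hxh : ∀ n, xh n =
      if ⟪y n - x n, ystar n⟫ < 0 then
        x n + (⟪y n - x n, ystar n⟫ / ‖ystar n‖ ^ 2) • ystar n
      else x n)
    (hQ : ∀ n, x (n + 1) ∈ Hset x₀ (x n) ∩ Hset (x n) (xh n) ∧
      ∀ w ∈ Hset x₀ (x n) ∩ Hset (x n) (xh n), ‖x₀ - x (n + 1)‖ ≤ ‖x₀ - w‖) :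
    (Summable (fun n => ‖x (n + 1) - x n‖ ^ 2) ∧
      Summable (fun n => ‖xh n - x n‖ ^ 2)) ∧
    ((∀ (z : X) (φ : ℕ → ℕ), StrictMono φ →
        (∀ u : X, Tendsto (fun n => ⟪x (φ n), u⟫) atTop (𝓝 ⟪z, u⟫)) → (0:X) ∈ M z) →
      ∃ z, (0:X) ∈ M z ∧ (∀ w, (0:X) ∈ M w → ‖x₀ - z‖ ≤ ‖x₀ - w‖) ∧
        Tendsto x atTop (𝓝 z)) :=
  stmt_3_general M hMmono hZ x₀ y ystar x xh hgra hx0 hxh hQ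
end

section
/- Let X be a real Hilbert space, let A : X → 2^X be maximally monotone, and let B : X → X be monotone and β-Lipschitzian with β > 0. Suppose zer(A + B) = {x : 0 ∈ Ax + Bx} ≠ ∅, take x₀ ∈ X, let ε ∈ (0, 1/(β+1)), and let (γ_n) be a sequence in [ε, (1−ε)/β]. Define the iteration (Tseng's forward-backward-forward algorithm): v_n* = γ_n B x_n; y_n = J_{γ_n A}(x_n − v_n*); x_{n+1} = y_n − γ_n B y_n + v_n*, where J_{γA} = (Id + γA)^{-1} is the resolvent. Then (x_n) converges weakly to a point in zer(A + B). -/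
/-!
Tseng's step is Fejér monotone with respect to `zer (A + B)`: for every zero `z`,
`‖x (n+1) - z‖² ≤ ‖x n - z‖² - (1 - γₙ²β²) ‖x n - y n‖²`. Hence the iterates are bounded,
`x n - y n → 0`, and the residual `γₙ⁻¹ (x n - y n) - (B (x n) - B (y n)) ∈ (A + B) (y n)` tends to
`0` strongly. The graph of the maximally monotone operator `A + B` is closed for weak-strong
convergence, so every weak cluster point of `(x n)` is a zero, and Opial's argument gives weak
convergence of the whole sequence.

Maximality of `A + B` comes from a fixed point of the contraction `p ↦ J_{γA} (x - γ B p)`, and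
the resolvent exists by Minty's theorem, proved variationally: the function
`(a, b) ↦ sup {‖a + b‖² / 2 - ⟪a - y, b - v⟫ | v ∈ A y}` is nonnegative by maximality and
strongly convex, so it has a minimiser `(a, b)`, and comparing with the points of the graph forces
`a + b = 0` and `-a ∈ A a`.
-/

open Filter Topology RealInnerProductSpace

theorem cauchySeq_of_norm_sub_sq_le {E : Type*} [NormedAddCommGroup E] {s : ℕ → E} {δ : ℕ → ℝ}
    (hδ : Tendsto δ atTop (𝓝 0)) (h : ∀ m n, ‖s m - s n‖ ^ 2 ≤ δ m + δ n) : CauchySeq s := by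
  refine Metric.cauchySeq_iff.mpr fun ε hε => ?_
  obtain ⟨N, hN⟩ := eventually_atTop.mp (hδ.eventually (gt_mem_nhds (half_pos (pow_pos hε 2))))
  refine ⟨N, fun m hm n hn => ?_⟩
  rw [dist_eq_norm, ← pow_lt_pow_iff_left₀ (norm_nonneg _) hε.le two_ne_zero]
  linarith [h m n, hN m hm, hN n hn]

theorem tendsto_sub_nhds_zero_of_fejer {E : Type*} [NormedAddCommGroup E] {x y : ℕ → E} {z : E}
    {ε : ℝ} (hε : 0 < ε) (h : ∀ n, ‖x (n + 1) - z‖ ^ 2 + ε * ‖x n - y n‖ ^ 2 ≤ ‖x n - z‖ ^ 2) :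
    Tendsto (fun n => x n - y n) atTop (𝓝 0) := by
  have hanti : Antitone fun n => ‖x n - z‖ ^ 2 := antitone_nat_of_succ_le fun n => by
    nlinarith [h n, mul_nonneg hε.le (sq_nonneg ‖x n - y n‖)]
  have hlim := tendsto_atTop_ciInf hanti ⟨0, by rintro _ ⟨n, rfl⟩; positivity⟩
  have hsq : Tendsto (fun n => ‖x n - y n‖ ^ 2) atTop (𝓝 0) :=
    squeeze_zero (g := fun n => (‖x n - z‖ ^ 2 - ‖x (n + 1) - z‖ ^ 2) / ε)
      (fun n => by positivity) (fun n => (le_div_iff₀' hε).mpr (by linarith [h n]))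
      (by simpa using (hlim.sub (hlim.comp (tendsto_add_atTop_nat 1))).div_const ε)
  rw [tendsto_zero_iff_norm_tendsto_zero]
  simpa using hsq.sqrt

section WeakConvergence

variable {X : Type*} [NormedAddCommGroup X] [InnerProductSpace ℝ X]

def WeakTendsto (x : ℕ → X) (z : X) : Prop :=
  ∀ u, Tendsto (fun n => ⟪x n, u⟫) atTop (𝓝 ⟪z, u⟫)

theorem exists_subseq_weakTendsto [CompleteSpace X] {x : ℕ → X} {R : ℝ} (hx : ∀ n, ‖x n‖ ≤ R) :
    ∃ φ : ℕ → ℕ, StrictMono φ ∧ ∃ z, WeakTendsto (x ∘ φ) z := by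
  set V := (Submodule.span ℝ (Set.range x)).topologicalClosure
  have hxV (n : ℕ) : x n ∈ V :=
    Submodule.le_topologicalClosure _ (Submodule.subset_span (Set.mem_range_self n))
  have : TopologicalSpace.SeparableSpace V := by
    have := (Set.countable_range x).isSeparable.span (R := ℝ) |>.closure
    rw [← Submodule.topologicalClosure_coe] at this
    exact this.separableSpace
  have : CompleteSpace V := (Submodule.isClosed_topologicalClosure _).completeSpace_coe
  obtain ⟨ℓ, -, φ, hφ, hℓ⟩ := WeakDual.isSeqCompact_closedBall ℝ V 0 R
    (x := fun n => WeakDual.toStrongDual.symm (InnerProductSpace.toDual ℝ V ⟨x n, hxV n⟩))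
    fun n => by simpa using hx n
  refine ⟨φ, hφ, (InnerProductSpace.toDual ℝ V).symm (WeakDual.toStrongDual ℓ), fun u => ?_⟩
  have := ((WeakDual.eval_continuous (V.orthogonalProjectionOnto u)).tendsto ℓ).comp hℓ
  rw [← V.inner_orthogonalProjectionOnto_eq_of_mem_left, InnerProductSpace.toDual_symm_apply]
  simpa [Function.comp_def] using this

namespace WeakTendsto

variable {x y : ℕ → X} {z : X}

theorem of_tendsto_sub (h : WeakTendsto x z) (hxy : Tendsto (fun n => x n - y n) atTop (𝓝 0)) :
    WeakTendsto y z := fun u => by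
  have := (h u).sub ((hxy.inner tendsto_const_nhds (y := u)))
  simpa only [inner_sub_left, sub_sub_cancel, inner_zero_left, sub_zero] using this

theorem exists_norm_le [CompleteSpace X] (h : WeakTendsto x z) : ∃ R, ∀ n, ‖x n‖ ≤ R := by
  obtain ⟨R, hR⟩ := banach_steinhaus (g := fun n => innerSL ℝ (x n)) fun u => by
    obtain ⟨C, hC⟩ := isBounded_iff_forall_norm_le.mp (Metric.isBounded_range_of_tendsto _ (h u))
    exact ⟨C, fun n => hC _ ⟨n, rfl⟩⟩
  exact ⟨R, fun n => by simpa only [innerSL_apply_norm] using hR n⟩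

theorem eq_of_tendsto_norm_sub {w : X} {φ ψ : ℕ → ℕ} (hφ : Tendsto φ atTop atTop)
    (hψ : Tendsto ψ atTop atTop) (hz : WeakTendsto (x ∘ φ) z) (hw : WeakTendsto (x ∘ ψ) w)
    {d e : ℝ} (hd : Tendsto (fun n => ‖x n - z‖) atTop (𝓝 d))
    (he : Tendsto (fun n => ‖x n - w‖) atTop (𝓝 e)) : z = w := by
  have hpol (v : X) : ⟪v, z - w⟫ = (‖v - w‖ ^ 2 - ‖v - z‖ ^ 2 + ‖z‖ ^ 2 - ‖w‖ ^ 2) / 2 := by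
    rw [norm_sub_sq_real, norm_sub_sq_real, inner_sub_right]; ring
  have hlim : Tendsto (fun n => ⟪x n, z - w⟫) atTop
      (𝓝 ((e ^ 2 - d ^ 2 + ‖z‖ ^ 2 - ‖w‖ ^ 2) / 2)) := by
    simp only [hpol]
    exact ((((he.pow 2).sub (hd.pow 2)).add_const _).sub_const _).div_const 2
  have h₁ := tendsto_nhds_unique (hz (z - w)) (hlim.comp hφ)
  have h₂ := tendsto_nhds_unique (hw (z - w)) (hlim.comp hψ)
  rw [← sub_eq_zero, ← inner_self_eq_zero (𝕜 := ℝ), inner_sub_left, h₁, h₂, sub_self]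

end WeakTendsto

theorem exists_weakTendsto_of_fejer [CompleteSpace X] {C : Set X} {x : ℕ → X} (hC : C.Nonempty)
    (hfejer : ∀ z ∈ C, ∀ n, ‖x (n + 1) - z‖ ≤ ‖x n - z‖)
    (hclus : ∀ φ : ℕ → ℕ, Tendsto φ atTop atTop → ∀ z, WeakTendsto (x ∘ φ) z → z ∈ C) :
    ∃ z ∈ C, WeakTendsto x z := by
  have hanti (z : X) (hz : z ∈ C) : Antitone fun n => ‖x n - z‖ :=
    antitone_nat_of_succ_le (hfejer z hz)
  have hconv (z : X) (hz : z ∈ C) : ∃ d, Tendsto (fun n => ‖x n - z‖) atTop (𝓝 d) :=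
    ⟨_, tendsto_atTop_ciInf (hanti z hz) ⟨0, by rintro _ ⟨n, rfl⟩; exact norm_nonneg _⟩⟩
  obtain ⟨z₀, hz₀⟩ := hC
  have hbdd (n : ℕ) : ‖x n‖ ≤ ‖x 0 - z₀‖ + ‖z₀‖ := calc
    ‖x n‖ ≤ ‖x n - z₀‖ + ‖z₀‖ := norm_le_norm_sub_add _ _
    _ ≤ ‖x 0 - z₀‖ + ‖z₀‖ := by gcongr; exact hanti z₀ hz₀ n.zero_le
  obtain ⟨φ, hφ, z, hz⟩ := exists_subseq_weakTendsto hbdd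
  have hzC := hclus φ hφ.tendsto_atTop z hz
  refine ⟨z, hzC, fun u => tendsto_of_subseq_tendsto fun ns hns => ?_⟩
  obtain ⟨ψ, hψ, w, hw⟩ := exists_subseq_weakTendsto fun n => hbdd (ns n)
  have hns' := hns.comp hψ.tendsto_atTop
  have hwC := hclus (ns ∘ ψ) hns' w hw
  obtain ⟨d, hd⟩ := hconv z hzC
  obtain ⟨e, he⟩ := hconv w hwC
  obtain rfl := WeakTendsto.eq_of_tendsto_norm_sub hφ.tendsto_atTop hns' hz hw hd he
  exact ⟨ψ, hw u⟩

end WeakConvergence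

section MonotoneOperator

variable {X : Type*} [NormedAddCommGroup X] [InnerProductSpace ℝ X]

def IsMonotoneOp (A : X → Set X) : Prop :=
  ∀ x y u v, u ∈ A x → v ∈ A y → (0 : ℝ) ≤ ⟪x - y, u - v⟫

def IsMaxMonotoneOp (A : X → Set X) : Prop :=
  IsMonotoneOp A ∧ ∀ A' : X → Set X, IsMonotoneOp A' → (∀ x, A x ⊆ A' x) → ∀ x, A' x ⊆ A x

variable {A : X → Set X}

theorem IsMaxMonotoneOp.mem_of_forall_inner_nonneg (hA : IsMaxMonotoneOp A) {x u : X}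
    (h : ∀ y v, v ∈ A y → 0 ≤ ⟪x - y, u - v⟫) : u ∈ A x := by
  refine hA.2 (fun y => A y ∪ {v | y = x ∧ v = u}) ?_ (fun _ => Set.subset_union_left) x
    (Or.inr ⟨rfl, rfl⟩)
  rintro y y' v v' (hv | ⟨rfl, rfl⟩) (hv' | ⟨rfl, rfl⟩)
  · exact hA.1 _ _ _ _ hv hv'
  · rw [← inner_neg_neg, neg_sub, neg_sub]; exact h _ _ hv
  · exact h _ _ hv'
  · simp

theorem IsMaxMonotoneOp.exists_mem (hA : IsMaxMonotoneOp A) : ∃ x u, u ∈ A x := by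
  by_contra! h
  exact h 0 0 (hA.mem_of_forall_inner_nonneg fun y v hv => absurd hv (h y v))

theorem IsMonotoneOp.image_smul_add (hA : IsMonotoneOp A) {c : ℝ} (hc : 0 ≤ c) (w : X) :
    IsMonotoneOp fun x => (fun u => c • u + w) '' A x := by
  rintro x y _ _ ⟨u, hu, rfl⟩ ⟨v, hv, rfl⟩
  rw [add_sub_add_right_eq_sub, ← smul_sub, real_inner_smul_right]
  exact mul_nonneg hc (hA x y u v hu hv)

theorem IsMaxMonotoneOp.image_smul_add (hA : IsMaxMonotoneOp A) {c : ℝ} (hc : 0 < c) (w : X) :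
    IsMaxMonotoneOp fun x => (fun u => c • u + w) '' A x := by
  refine ⟨hA.1.image_smul_add hc.le w, fun M hM hAM x u hu => ?_⟩
  have hinv (u : X) : c • (c⁻¹ • u + -(c⁻¹ • w)) + w = u := by
    rw [smul_add, smul_neg, smul_inv_smul₀ hc.ne', smul_inv_smul₀ hc.ne', neg_add_cancel_right]
  have hA' := hA.2 _ (hM.image_smul_add (inv_nonneg.mpr hc.le) (-(c⁻¹ • w))) fun y v hv =>
    ⟨c • v + w, hAM y ⟨v, hv, rfl⟩, by
      simp only [smul_add, inv_smul_smul₀ hc.ne', add_neg_cancel_right]⟩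
  exact ⟨_, hA' x ⟨u, hu, rfl⟩, hinv u⟩

theorem IsMonotoneOp.norm_sub_le_norm_add_smul_sub (hA : IsMonotoneOp A) {γ : ℝ} (hγ : 0 ≤ γ)
    {p p' u u' : X} (hu : u ∈ A p) (hu' : u' ∈ A p') :
    ‖p - p'‖ ≤ ‖(p + γ • u) - (p' + γ • u')‖ := by
  have hsq : ‖p - p'‖ ^ 2 ≤ ⟪p - p', (p + γ • u) - (p' + γ • u')⟫ := by
    rw [add_sub_add_comm, ← smul_sub, inner_add_right, real_inner_smul_right,
      real_inner_self_eq_norm_sq]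
    nlinarith [hA p p' u u' hu hu']
  nlinarith [real_inner_le_norm (p - p') ((p + γ • u) - (p' + γ • u')), norm_nonneg (p - p'),
    norm_nonneg ((p + γ • u) - (p' + γ • u'))]

noncomputable def mintyFun (a b y v : X) : ℝ := ‖a + b‖ ^ 2 / 2 - ⟪a - y, b - v⟫

def IsMintyBound (A : X → Set X) (a b : X) (c : ℝ) : Prop :=
  ∀ y v, v ∈ A y → mintyFun a b y v ≤ c

theorem mintyFun_convexComb (t : ℝ) (a₁ a₂ b₁ b₂ y v : X) :
    mintyFun ((1 - t) • a₁ + t • a₂) ((1 - t) • b₁ + t • b₂) y v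
      = (1 - t) * mintyFun a₁ b₁ y v + t * mintyFun a₂ b₂ y v
        - t * (1 - t) / 2 * (‖a₁ - a₂‖ ^ 2 + ‖b₁ - b₂‖ ^ 2) := by
  simp only [mintyFun, ← real_inner_self_eq_norm_sq, inner_add_left, inner_add_right,
    inner_sub_left, inner_sub_right, real_inner_smul_left, real_inner_smul_right,
    real_inner_comm a₁ a₂, real_inner_comm b₁ b₂, real_inner_comm a₁ b₁, real_inner_comm a₂ b₂,
    real_inner_comm a₁ b₂, real_inner_comm a₂ b₁]
  ring

theorem IsMintyBound.convexComb {a₁ a₂ b₁ b₂ : X} {c₁ c₂ t : ℝ} (h₁ : IsMintyBound A a₁ b₁ c₁)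
    (h₂ : IsMintyBound A a₂ b₂ c₂) (ht₀ : 0 ≤ t) (ht₁ : t ≤ 1) :
    IsMintyBound A ((1 - t) • a₁ + t • a₂) ((1 - t) • b₁ + t • b₂)
      ((1 - t) * c₁ + t * c₂ - t * (1 - t) / 2 * (‖a₁ - a₂‖ ^ 2 + ‖b₁ - b₂‖ ^ 2)) := by
  intro y v hv
  rw [mintyFun_convexComb]
  have := mul_le_mul_of_nonneg_left (h₁ y v hv) (sub_nonneg.mpr ht₁)
  have := mul_le_mul_of_nonneg_left (h₂ y v hv) ht₀
  linarith

theorem isMintyBound_of_tendsto {a b : ℕ → X} {c : ℕ → ℝ} {a₀ b₀ : X} {c₀ : ℝ}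
    (ha : Tendsto a atTop (𝓝 a₀)) (hb : Tendsto b atTop (𝓝 b₀)) (hc : Tendsto c atTop (𝓝 c₀))
    (h : ∀ n, IsMintyBound A (a n) (b n) (c n)) : IsMintyBound A a₀ b₀ c₀ := fun y v hv =>
  le_of_tendsto_of_tendsto' ((((ha.add hb).norm.pow 2).div_const 2).sub
    ((ha.sub_const y).inner (hb.sub_const v))) hc fun n => h n y v hv

theorem IsMonotoneOp.isMintyBound_of_mem (hA : IsMonotoneOp A) {y v : X} (hv : v ∈ A y) :
    IsMintyBound A y v (‖y + v‖ ^ 2 / 2) := fun y' v' hv' => by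
  unfold mintyFun; linarith [hA y y' v v' hv hv']

theorem IsMaxMonotoneOp.nonneg_of_isMintyBound (hA : IsMaxMonotoneOp A) {a b : X} {c : ℝ}
    (h : IsMintyBound A a b c) : 0 ≤ c := by
  by_cases hrel : ∀ y v, v ∈ A y → 0 ≤ ⟪a - y, b - v⟫
  · have := h a b (hA.mem_of_forall_inner_nonneg hrel)
    simp only [mintyFun, sub_self, inner_zero_left, sub_zero] at this
    linarith [sq_nonneg ‖a + b‖]
  · push Not at hrel
    obtain ⟨y, v, hv, hneg⟩ := hrel
    have := h y v hv
    unfold mintyFun at this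
    nlinarith [sq_nonneg ‖a + b‖]

theorem IsMaxMonotoneOp.exists_isMintyBound_isLeast [CompleteSpace X] (hA : IsMaxMonotoneOp A) :
    ∃ a b m, IsMintyBound A a b m ∧ ∀ a' b' c, IsMintyBound A a' b' c → m ≤ c := by
  set C := {c | ∃ a b, IsMintyBound A a b c}
  have hC₀ : ∀ c ∈ C, 0 ≤ c := fun c ⟨a, b, h⟩ => hA.nonneg_of_isMintyBound h
  have hCne : C.Nonempty := by
    obtain ⟨y, v, hv⟩ := hA.exists_mem
    exact ⟨_, y, v, hA.1.isMintyBound_of_mem hv⟩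
  set m := sInf C
  have hmC (a b : X) (c : ℝ) (h : IsMintyBound A a b c) : m ≤ c := csInf_le ⟨0, hC₀⟩ ⟨a, b, h⟩
  set δ : ℕ → ℝ := fun n => 1 / (n + 1)
  have hδ : Tendsto δ atTop (𝓝 0) := tendsto_one_div_add_atTop_nhds_zero_nat
  have happrox (n : ℕ) : ∃ a b, IsMintyBound A a b (m + δ n) := by
    obtain ⟨c, ⟨a, b, h⟩, hc⟩ :=
      exists_lt_of_csInf_lt hCne (lt_add_of_pos_right m Nat.one_div_pos_of_nat)
    exact ⟨a, b, fun y v hv => (h y v hv).trans hc.le⟩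
  choose a b hab using happrox
  have hsq (n k : ℕ) : ‖a n - a k‖ ^ 2 + ‖b n - b k‖ ^ 2 ≤ 4 * δ n + 4 * δ k := by
    have := hmC _ _ _ ((hab n).convexComb (hab k) (t := 1 / 2) (by norm_num) (by norm_num))
    linarith
  have hcauchy {s : ℕ → X} (hs : ∀ n k, ‖s n - s k‖ ^ 2 ≤ 4 * δ n + 4 * δ k) : CauchySeq s := by
    refine cauchySeq_of_norm_sub_sq_le (δ := fun n => 4 * δ n) ?_ hs
    simpa using hδ.const_mul 4
  obtain ⟨a₀, ha₀⟩ := cauchySeq_tendsto_of_complete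
    (hcauchy (s := a) fun n k => by nlinarith [hsq n k, sq_nonneg ‖b n - b k‖])
  obtain ⟨b₀, hb₀⟩ := cauchySeq_tendsto_of_complete
    (hcauchy (s := b) fun n k => by nlinarith [hsq n k, sq_nonneg ‖a n - a k‖])
  exact ⟨a₀, b₀, m, isMintyBound_of_tendsto ha₀ hb₀ (by simpa using hδ.const_add m) hab, hmC⟩

theorem IsMonotoneOp.add_norm_sub_sq_le_of_isLeast (hA : IsMonotoneOp A) {a b : X} {m : ℝ}
    (hab : IsMintyBound A a b m) (hleast : ∀ a' b' c, IsMintyBound A a' b' c → m ≤ c)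
    {y v : X} (hv : v ∈ A y) : m + (‖a - y‖ ^ 2 + ‖b - v‖ ^ 2) / 2 ≤ ‖y + v‖ ^ 2 / 2 := by
  set K := ‖a - y‖ ^ 2 + ‖b - v‖ ^ 2
  have hstep : ∀ t ∈ Set.Ioc (0 : ℝ) 1, m + (1 - t) * K / 2 ≤ ‖y + v‖ ^ 2 / 2 := by
    rintro t ⟨ht₀, ht₁⟩
    have := hleast _ _ _ (hab.convexComb (hA.isMintyBound_of_mem hv) ht₀.le ht₁)
    have hK : 0 ≤ t * (‖y + v‖ ^ 2 / 2 - m - (1 - t) * K / 2) := by linarith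
    linarith [nonneg_of_mul_nonneg_right hK ht₀]
  have hlim : Tendsto (fun t : ℝ => m + (1 - t) * K / 2) (𝓝[>] 0) (𝓝 (m + (1 - 0) * K / 2)) :=
    (Continuous.tendsto (by fun_prop) 0).mono_left nhdsWithin_le_nhds
  have := le_of_tendsto hlim (eventually_of_mem (Ioc_mem_nhdsGT zero_lt_one) hstep)
  linarith

theorem IsMaxMonotoneOp.exists_neg_mem [CompleteSpace X] (hA : IsMaxMonotoneOp A) :
    ∃ p, -p ∈ A p := by
  obtain ⟨a, b, m, hab, hleast⟩ := hA.exists_isMintyBound_isLeast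
  have hm := hA.nonneg_of_isMintyBound hab
  have hkey {y v : X} (hv : v ∈ A y) := hA.1.add_norm_sub_sq_le_of_isLeast hab hleast hv
  have hmem : -a ∈ A (-b) := hA.mem_of_forall_inner_nonneg fun y v hv => by
    have hexp : ⟪-b - y, -a - v⟫
        = ‖y + v‖ ^ 2 / 2 - (‖a - y‖ ^ 2 + ‖b - v‖ ^ 2) / 2 + ‖a + b‖ ^ 2 / 2 := by
      simp only [← real_inner_self_eq_norm_sq, inner_add_left, inner_add_right,
        inner_sub_left, inner_sub_right, inner_neg_left, inner_neg_right,
        real_inner_comm y v, real_inner_comm a y, real_inner_comm b v,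
        real_inner_comm a b]
      ring
    nlinarith [hkey hv, sq_nonneg ‖a + b‖]
  have hab0 : a + b = 0 := by
    have := hkey hmem
    rw [sub_neg_eq_add, sub_neg_eq_add, add_comm b a, ← neg_add, norm_neg, add_comm b a] at this
    exact norm_eq_zero.mp (by nlinarith [norm_nonneg (a + b)])
  rw [neg_eq_of_add_eq_zero_left hab0] at hmem
  exact ⟨a, hmem⟩

theorem IsMaxMonotoneOp.exists_add_smul_eq [CompleteSpace X] (hA : IsMaxMonotoneOp A) {γ : ℝ}
    (hγ : 0 < γ) (q : X) : ∃ p, ∃ u ∈ A p, p + γ • u = q := by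
  obtain ⟨p, u, hu, hp⟩ := (hA.image_smul_add hγ (-q)).exists_neg_mem
  replace hp : γ • u + -q = -p := hp
  exact ⟨p, u, hu, by linear_combination (norm := abel) hp⟩

theorem IsMaxMonotoneOp.neg_mem_of_forall_inner_nonneg [CompleteSpace X] (hA : IsMaxMonotoneOp A)
    {B : X → X} {K : NNReal} (hB : LipschitzWith K B) {x : X}
    (h : ∀ y v, v ∈ A y → 0 ≤ ⟪y - x, v + B y⟫) : -B x ∈ A x := by
  set γ : NNReal := (K + 1)⁻¹
  have hγ : (0 : ℝ) < γ := by positivity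
  choose J U hU hJ using hA.exists_add_smul_eq hγ
  have hJlip : LipschitzWith 1 J := LipschitzWith.of_dist_le_mul fun q q' => by
    simpa only [NNReal.coe_one, one_mul, dist_eq_norm, hJ] using
      hA.1.norm_sub_le_norm_add_smul_sub hγ.le (hU q) (hU q')
  have hcontr : ContractingWith (γ * K) fun p => J (x - (γ : ℝ) • B p) := by
    refine ⟨by rw [mul_comm, ← div_eq_mul_inv, div_lt_one (by positivity)]; exact lt_add_one K, ?_⟩
    refine LipschitzWith.of_dist_le_mul fun p p' => ?_
    calc dist (J (x - (γ : ℝ) • B p)) (J (x - (γ : ℝ) • B p'))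
        ≤ dist (x - (γ : ℝ) • B p) (x - (γ : ℝ) • B p') := by
          simpa only [NNReal.coe_one, one_mul] using hJlip.dist_le_mul _ _
      _ = γ * dist (B p) (B p') := by rw [dist_sub_left, dist_smul₀, Real.norm_of_nonneg hγ.le]
      _ ≤ γ * (K * dist p p') := by gcongr; exact hB.dist_le_mul p p'
      _ = ↑(γ * K) * dist p p' := by push_cast; ring
  -- At the fixed point `p`, `γ⁻¹ (x - p) - B p ∈ A p`, and testing `h` there forces `p = x`.
  obtain ⟨p, hp, -⟩ := hcontr.exists_fixedPoint x (edist_ne_top _ _)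
  replace hp : J (x - (γ : ℝ) • B p) = p := hp
  set u := U (x - (γ : ℝ) • B p)
  have hu : u ∈ A p := hp ▸ hU _
  have hup : (γ : ℝ) • (u + B p) = x - p := by
    have := hJ (x - (γ : ℝ) • B p)
    rw [hp] at this
    rw [smul_add]; linear_combination (norm := abel) this
  have hpx : p = x := by
    have := h p u hu
    rw [← inv_smul_smul₀ hγ.ne' (u + B p), hup, real_inner_smul_right, ← neg_sub p x,
      inner_neg_right, real_inner_self_eq_norm_sq] at this
    have : ‖p - x‖ ^ 2 ≤ 0 := by nlinarith [inv_pos.mpr hγ]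
    exact sub_eq_zero.mp (norm_eq_zero.mp (by nlinarith [norm_nonneg (p - x)]))
  subst hpx
  rw [sub_self, smul_eq_zero_iff_right hγ.ne', add_eq_zero_iff_eq_neg] at hup
  exact hup ▸ hu

theorem IsMaxMonotoneOp.neg_mem_of_weakTendsto [CompleteSpace X] (hA : IsMaxMonotoneOp A)
    {B : X → X} (hBmono : ∀ x y, 0 ≤ ⟪x - y, B x - B y⟫) {K : NNReal} (hBlip : LipschitzWith K B)
    {y w : ℕ → X} {z : X} (hw : ∀ n, w n ∈ A (y n)) (hy : WeakTendsto y z)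
    (hres : Tendsto (fun n => w n + B (y n)) atTop (𝓝 0)) : -B z ∈ A z := by
  obtain ⟨R, hR⟩ := hy.exists_norm_le
  refine hA.neg_mem_of_forall_inner_nonneg hBlip fun p v hv => ?_
  have hle (n : ℕ) : ⟪p - y n, w n + B (y n)⟫ ≤ ⟪p - y n, v + B p⟫ := by
    have := add_nonneg (hA.1 p (y n) v (w n) hv (hw n)) (hBmono p (y n))
    rw [← inner_add_right, show v - w n + (B p - B (y n)) = (v + B p) - (w n + B (y n)) by abel,
      inner_sub_right] at this
    linarith
  have hleft : Tendsto (fun n => ⟪p - y n, w n + B (y n)⟫) atTop (𝓝 0) := by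
    refine squeeze_zero_norm (fun n => ?_) (by simpa using hres.norm.const_mul (‖p‖ + R))
    rw [Real.norm_eq_abs]
    calc |⟪p - y n, w n + B (y n)⟫| ≤ ‖p - y n‖ * ‖w n + B (y n)‖ := abs_real_inner_le_norm _ _
      _ ≤ (‖p‖ + R) * ‖w n + B (y n)‖ := by
        gcongr; exact (norm_sub_le _ _).trans (add_le_add_right (hR n) _)
  have hright : Tendsto (fun n => ⟪p - y n, v + B p⟫) atTop (𝓝 ⟪p - z, v + B p⟫) := by
    simpa only [inner_sub_left] using tendsto_const_nhds.sub (hy (v + B p))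
  exact le_of_tendsto_of_tendsto' hleft hright hle

theorem IsMonotoneOp.norm_tseng_sub_sq_le (hA : IsMonotoneOp A) {B : X → X}
    (hBmono : ∀ x y, 0 ≤ ⟪x - y, B x - B y⟫) {β γ : ℝ}
    (hBlip : ∀ x y, ‖B x - B y‖ ≤ β * ‖x - y‖) {x y w z : X} (hw : w ∈ A y)
    (hy : x - y = γ • (w + B x)) (hγ : 0 ≤ γ) (hz : -B z ∈ A z) :
    ‖y - γ • B y + γ • B x - z‖ ^ 2 + (1 - (γ * β) ^ 2) * ‖x - y‖ ^ 2 ≤ ‖x - z‖ ^ 2 := by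
  have hmono : 0 ≤ ⟪y - z, w + B y⟫ := by
    have := add_nonneg (hA y z w (-B z) hw hz) (hBmono y z)
    rwa [← inner_add_right, sub_neg_eq_add, add_add_sub_cancel] at this
  have hlip : ‖B x - B y‖ ^ 2 ≤ β ^ 2 * ‖x - y‖ ^ 2 := by
    rw [← mul_pow]; exact pow_le_pow_left₀ (norm_nonneg _) (hBlip x y) 2
  have e₁ : ‖y - γ • B y + γ • B x - z‖ ^ 2
      = ‖y - z‖ ^ 2 + 2 * (γ * ⟪y - z, B x - B y⟫) + γ ^ 2 * ‖B x - B y‖ ^ 2 := by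
    rw [show y - γ • B y + γ • B x - z = (y - z) + γ • (B x - B y) by rw [smul_sub]; abel,
      norm_add_sq_real, real_inner_smul_right, norm_smul, Real.norm_of_nonneg hγ, mul_pow]
  have e₂ : ‖x - z‖ ^ 2 = ‖x - y‖ ^ 2 + 2 * ⟪x - y, y - z⟫ + ‖y - z‖ ^ 2 := by
    rw [← norm_add_sq_real, sub_add_sub_cancel]
  have e₃ : ⟪x - y, y - z⟫ = γ * ⟪y - z, w + B y⟫ + γ * ⟪y - z, B x - B y⟫ := by
    rw [hy, real_inner_smul_left, real_inner_comm, ← mul_add, ← inner_add_right, add_add_sub_cancel]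
  nlinarith [mul_nonneg hγ hmono, mul_le_mul_of_nonneg_left hlip (sq_nonneg γ)]

theorem norm_tseng_residual_le {B : X → X} {β γ ε : ℝ}
    (hBlip : ∀ x y, ‖B x - B y‖ ≤ β * ‖x - y‖) {x y w : X} (hy : x - y = γ • (w + B x))
    (hε : 0 < ε) (hγ : ε ≤ γ) : ‖w + B y‖ ≤ (ε⁻¹ + β) * ‖x - y‖ := by
  have hγ₀ : 0 < γ := hε.trans_le hγ
  have hres : w + B y = γ⁻¹ • (x - y) - (B x - B y) := by
    rw [hy, inv_smul_smul₀ hγ₀.ne']; abel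
  calc ‖w + B y‖ ≤ γ⁻¹ * ‖x - y‖ + β * ‖x - y‖ := by
        rw [hres]
        refine (norm_sub_le _ _).trans (add_le_add ?_ (hBlip x y))
        rw [norm_smul, Real.norm_of_nonneg (inv_nonneg.mpr hγ₀.le)]
    _ ≤ (ε⁻¹ + β) * ‖x - y‖ := by
        rw [add_mul]; gcongr

end MonotoneOperator

theorem stmt_5_general
    {X : Type*} [NormedAddCommGroup X] [InnerProductSpace ℝ X] [CompleteSpace X]
    (A : X → Set X)
    (hAmono : ∀ x y u v, u ∈ A x → v ∈ A y → (0:ℝ) ≤ ⟪x - y, u - v⟫)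
    (hAmax : ∀ A' : X → Set X,
      (∀ x y u v, u ∈ A' x → v ∈ A' y → (0:ℝ) ≤ ⟪x - y, u - v⟫) →
      (∀ x, A x ⊆ A' x) → ∀ x, A' x ⊆ A x)
    (B : X → X) (β : ℝ) (hβ : 0 < β)
    (hBmono : ∀ x y, (0:ℝ) ≤ ⟪x - y, B x - B y⟫)
    (hBlip : ∀ x y, ‖B x - B y‖ ≤ β * ‖x - y‖)
    (hzer : ∃ z, ∃ u ∈ A z, u + B z = 0)
    (ε : ℝ) (hε : ε ∈ Set.Ioo (0:ℝ) (1 / (β + 1)))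
    (γ : ℕ → ℝ) (hγ : ∀ n, γ n ∈ Set.Icc ε ((1 - ε) / β))
    (x vstar y : ℕ → X)
    (hvstar : ∀ n, vstar n = γ n • B (x n))
    (hy : ∀ n, (γ n)⁻¹ • (x n - vstar n - y n) ∈ A (y n))
    (hxrec : ∀ n, x (n + 1) = y n - γ n • B (y n) + vstar n) :
    ∃ z, (∃ u ∈ A z, u + B z = 0) ∧
      ∀ u : X, Tendsto (fun n => ⟪x n, u⟫) atTop (𝓝 ⟪z, u⟫) := by
  obtain ⟨hε, -⟩ := hε
  have hA : IsMaxMonotoneOp A := ⟨hAmono, hAmax⟩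
  have hBlip' : LipschitzWith ⟨β, hβ.le⟩ B :=
    LipschitzWith.of_dist_le_mul fun p q => by rw [dist_eq_norm, dist_eq_norm]; exact hBlip p q
  have hγ₀ (n : ℕ) : 0 < γ n := hε.trans_le (hγ n).1
  set w : ℕ → X := fun n => (γ n)⁻¹ • (x n - vstar n - y n)
  have hstep (n : ℕ) : x n - y n = γ n • (w n + B (x n)) := by
    simp only [w, smul_add, smul_inv_smul₀ (hγ₀ n).ne', hvstar]; abel
  have hfejer (z : X) (hz : -B z ∈ A z) (n : ℕ) :
      ‖x (n + 1) - z‖ ^ 2 + ε * ‖x n - y n‖ ^ 2 ≤ ‖x n - z‖ ^ 2 := by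
    have hγβ : γ n * β ≤ 1 - ε := (le_div_iff₀ hβ).mp (hγ n).2
    have hε₁ : ε ≤ 1 - (γ n * β) ^ 2 := by nlinarith [mul_pos (hγ₀ n) hβ]
    rw [hxrec, hvstar]
    nlinarith [hA.1.norm_tseng_sub_sq_le hBmono hBlip (hy n) (hstep n) (hγ₀ n).le hz,
      sq_nonneg ‖x n - y n‖]
  obtain ⟨z₀, u₀, hu₀, hzero⟩ := hzer
  have hz₀ : -B z₀ ∈ A z₀ := eq_neg_of_add_eq_zero_left hzero ▸ hu₀
  have hxy := tendsto_sub_nhds_zero_of_fejer hε (hfejer z₀ hz₀)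
  have hres : Tendsto (fun n => w n + B (y n)) atTop (𝓝 0) :=
    squeeze_zero_norm (fun n => norm_tseng_residual_le hBlip (hstep n) hε (hγ n).1)
      (by simpa using (tendsto_zero_iff_norm_tendsto_zero.mp hxy).const_mul (ε⁻¹ + β))
  obtain ⟨z, hz, hxz⟩ := exists_weakTendsto_of_fejer (C := {z | -B z ∈ A z}) ⟨z₀, hz₀⟩
    (fun z hz n => (pow_le_pow_iff_left₀ (norm_nonneg _) (norm_nonneg _) two_ne_zero).mp
      (by nlinarith [hfejer z hz n, sq_nonneg ‖x n - y n‖]))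
    fun φ hφ z' hz' => hA.neg_mem_of_weakTendsto hBmono hBlip' (fun n => hy (φ n))
      (hz'.of_tendsto_sub (hxy.comp hφ)) (hres.comp hφ)
  exact ⟨z, ⟨-B z, hz, neg_add_cancel _⟩, hxz⟩

/-- Corollary 5.3 (Tseng's forward-backward-forward algorithm). -/
theorem stmt_5
    {X : Type*} [NormedAddCommGroup X] [InnerProductSpace ℝ X] [CompleteSpace X]
    (A : X → Set X)
    (hAmono : ∀ x y u v, u ∈ A x → v ∈ A y → (0:ℝ) ≤ ⟪x - y, u - v⟫)
    (hAmax : ∀ A' : X → Set X,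
      (∀ x y u v, u ∈ A' x → v ∈ A' y → (0:ℝ) ≤ ⟪x - y, u - v⟫) →
      (∀ x, A x ⊆ A' x) → ∀ x, A' x ⊆ A x)
    (B : X → X) (β : ℝ) (hβ : 0 < β)
    (hBmono : ∀ x y, (0:ℝ) ≤ ⟪x - y, B x - B y⟫)
    (hBlip : ∀ x y, ‖B x - B y‖ ≤ β * ‖x - y‖)
    (hzer : ∃ z, ∃ u ∈ A z, u + B z = 0)
    (x₀ : X) (ε : ℝ) (hε : ε ∈ Set.Ioo (0:ℝ) (1 / (β + 1)))
    (γ : ℕ → ℝ) (hγ : ∀ n, γ n ∈ Set.Icc ε ((1 - ε) / β))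
    (x vstar y : ℕ → X)
    (hx0 : x 0 = x₀)
    (hvstar : ∀ n, vstar n = γ n • B (x n))
    (hy : ∀ n, (γ n)⁻¹ • (x n - vstar n - y n) ∈ A (y n))
    (hxrec : ∀ n, x (n + 1) = y n - γ n • B (y n) + vstar n) :
    ∃ z, (∃ u ∈ A z, u + B z = 0) ∧
      ∀ u : X, Tendsto (fun n => ⟪x n, u⟫) atTop (𝓝 ⟪z, u⟫) :=
  stmt_5_general A hAmono hAmax B β hβ hBmono hBlip hzer ε hε γ hγ x vstar y hvstar hy hxrec
end

section
/- Let Y and Z be reflexive real Banach spaces, let A : Y → 2^{Y*} and B : Z → 2^{Z*} be maximally monotone, let L : Y → Z be bounded linear, let s* ∈ Y*, and let r ∈ Z. Define M : Y × Z × Z* → 2^{Y* × Z* × Z} by M(x,y,v*) = (−s* + Ax + L*v*) × (By − v*) × {r − Lx + y}, let P be the set of solutions of the primal problem s* ∈ Ax + L*(B(Lx − r)), let D be the set of solutions of the dual problem −r ∈ −L(A^{-1}(s* − L*v*)) + B^{-1}v*, and let Z = {(x,v*) : s* − L*v* ∈ Ax and Lx − r ∈ B^{-1}v*}. Then the following are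 equivalent: P ≠ ∅; D ≠ ∅; Z ≠ ∅; zer M ≠ ∅. -/
/-!
All four sets are parametrisations of the Kuhn–Tucker set `{(x, v*) : s* − L*v* ∈ Ax, v* ∈ B(Lx − r)}`:
a primal solution `x` with `s* = u + L*v*`, `u ∈ Ax`, `v* ∈ B(Lx − r)` is such a pair; a dual solution
forces its witness `w ∈ B⁻¹v*` to be `Lx − r`; and `(x, y, v*) ∈ zer M` exactly when `(x, v*)` is a
Kuhn–Tucker pair and `y = Lx − r`.
-/

open NormedSpace

/-- The operator `M(x,y,v*) = (−s* + Ax + L*v*) × (By − v*) × {r − Lx + y}`. -/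
def tripleM {Y Z : Type*} [NormedAddCommGroup Y] [NormedSpace ℝ Y]
    [NormedAddCommGroup Z] [NormedSpace ℝ Z]
    (A : Y → Set (StrongDual ℝ Y)) (B : Z → Set (StrongDual ℝ Z)) (L : Y →L[ℝ] Z)
    (sstar : StrongDual ℝ Y) (r : Z) :
    Y × Z × StrongDual ℝ Z → Set (StrongDual ℝ Y × StrongDual ℝ Z × Z) :=
  fun p => {q | (∃ u ∈ A p.1, q.1 = -sstar + u + p.2.2.comp L) ∧
    (∃ w ∈ B p.2.1, q.2.1 = w - p.2.2) ∧ q.2.2 = r - L p.1 + p.2.1}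

section AddCommGroup

variable {G : Type*} [AddCommGroup G]

theorem exists_mem_eq_add_iff_sub_mem {S : Set G} {s t : G} :
    (∃ u ∈ S, s = u + t) ↔ s - t ∈ S :=
  ⟨fun ⟨u, hu, hs⟩ => by rwa [hs, add_sub_cancel_right], fun h => ⟨s - t, h, (sub_add_cancel s t).symm⟩⟩

theorem neg_eq_neg_add_iff_eq_sub {r a w : G} : -r = -a + w ↔ w = a - r := by
  rw [eq_neg_add_iff_add_eq, ← sub_eq_add_neg, eq_comm]

theorem zero_eq_neg_add_add_iff_eq_sub {s u t : G} : 0 = -s + u + t ↔ u = s - t := by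
  rw [eq_comm, neg_add_eq_sub, sub_add_eq_add_sub, sub_eq_zero, ← eq_sub_iff_add_eq]

theorem zero_eq_sub_add_iff_eq_sub {r a y : G} : 0 = r - a + y ↔ y = a - r := by
  rw [eq_comm, add_eq_zero_iff_eq_neg', neg_sub]

end AddCommGroup

section KuhnTucker

variable {Y Z : Type*} [NormedAddCommGroup Y] [NormedSpace ℝ Y]
  [NormedAddCommGroup Z] [NormedSpace ℝ Z]
  {A : Y → Set (StrongDual ℝ Y)} {B : Z → Set (StrongDual ℝ Z)} {L : Y →L[ℝ] Z}
  {sstar : StrongDual ℝ Y} {r : Z}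

theorem exists_primal_solution_iff_exists_kuhnTucker :
    (∃ x : Y, ∃ u ∈ A x, ∃ w ∈ B (L x - r), sstar = u + w.comp L) ↔
      ∃ (x : Y) (vs : StrongDual ℝ Z), sstar - vs.comp L ∈ A x ∧ vs ∈ B (L x - r) := by
  refine exists_congr fun x => ⟨?_, ?_⟩
  · rintro ⟨u, hu, vs, hvs, hs⟩
    exact ⟨vs, exists_mem_eq_add_iff_sub_mem.mp ⟨u, hu, hs⟩, hvs⟩
  · rintro ⟨vs, hA, hB⟩
    obtain ⟨u, hu, hs⟩ := exists_mem_eq_add_iff_sub_mem.mpr hA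
    exact ⟨u, hu, vs, hB, hs⟩

theorem exists_dual_solution_iff_exists_kuhnTucker :
    (∃ vs : StrongDual ℝ Z, ∃ x : Y, ∃ w : Z,
        sstar - vs.comp L ∈ A x ∧ vs ∈ B w ∧ -r = -(L x) + w) ↔
      ∃ (x : Y) (vs : StrongDual ℝ Z), sstar - vs.comp L ∈ A x ∧ vs ∈ B (L x - r) := by
  simp only [neg_eq_neg_add_iff_eq_sub, exists_eq_right_right]
  exact exists_comm

theorem zero_mem_tripleM_iff {x : Y} {y : Z} {vs : StrongDual ℝ Z} :
    (0, 0, 0) ∈ tripleM A B L sstar r (x, y, vs) ↔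
      sstar - vs.comp L ∈ A x ∧ vs ∈ B y ∧ y = L x - r := by
  simp only [tripleM, Set.mem_ofPred_eq, zero_eq_neg_add_add_iff_eq_sub,
    eq_comm (a := (0 : StrongDual ℝ Z)), sub_eq_zero, zero_eq_sub_add_iff_eq_sub, exists_eq_right]

theorem exists_zero_mem_tripleM_iff_exists_kuhnTucker :
    (∃ p : Y × Z × StrongDual ℝ Z, (0, 0, 0) ∈ tripleM A B L sstar r p) ↔
      ∃ (x : Y) (vs : StrongDual ℝ Z), sstar - vs.comp L ∈ A x ∧ vs ∈ B (L x - r) := by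
  simp only [Prod.exists, zero_mem_tripleM_iff]
  exact exists_congr fun x => exists_comm.trans <| exists_congr fun vs => exists_eq_right_right

end KuhnTucker

theorem stmt_9_general
    {Y Z : Type*} [NormedAddCommGroup Y] [NormedSpace ℝ Y]
    [NormedAddCommGroup Z] [NormedSpace ℝ Z]
    (A : Y → Set (StrongDual ℝ Y)) (B : Z → Set (StrongDual ℝ Z))
    (L : Y →L[ℝ] Z) (sstar : StrongDual ℝ Y) (r : Z) :
    -- P ≠ ∅ ↔ D ≠ ∅
    ((∃ x : Y, ∃ u ∈ A x, ∃ w ∈ B (L x - r), sstar = u + w.comp L) ↔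
      (∃ vs : StrongDual ℝ Z, ∃ x' : Y, ∃ w : Z,
        sstar - vs.comp L ∈ A x' ∧ vs ∈ B w ∧ -r = -(L x') + w)) ∧
    -- D ≠ ∅ ↔ Z ≠ ∅
    ((∃ vs : StrongDual ℝ Z, ∃ x' : Y, ∃ w : Z,
        sstar - vs.comp L ∈ A x' ∧ vs ∈ B w ∧ -r = -(L x') + w) ↔
      (∃ (x : Y) (vs : StrongDual ℝ Z), sstar - vs.comp L ∈ A x ∧ vs ∈ B (L x - r))) ∧
    -- Z ≠ ∅ ↔ zer M ≠ ∅
    ((∃ (x : Y) (vs : StrongDual ℝ Z), sstar - vs.comp L ∈ A x ∧ vs ∈ B (L x - r)) ↔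
      (∃ p : Y × Z × StrongDual ℝ Z,
        ((0 : StrongDual ℝ Y), (0 : StrongDual ℝ Z), (0 : Z)) ∈ tripleM A B L sstar r p)) := by
  rw [exists_primal_solution_iff_exists_kuhnTucker, exists_dual_solution_iff_exists_kuhnTucker,
    exists_zero_mem_tripleM_iff_exists_kuhnTucker]
  exact ⟨Iff.rfl, Iff.rfl, Iff.rfl⟩

/-- Lemma 2.2(iv): nonemptiness of the primal solution set, the dual solution set,
the Kuhn-Tucker set and `zer M` are all equivalent. -/
theorem stmt_9
    {Y Z : Type*} [NormedAddCommGroup Y] [NormedSpace ℝ Y] [CompleteSpace Y]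
    [NormedAddCommGroup Z] [NormedSpace ℝ Z] [CompleteSpace Z]
    (hYrefl : Function.Surjective ⇑(inclusionInDoubleDual ℝ Y))
    (hZrefl : Function.Surjective ⇑(inclusionInDoubleDual ℝ Z))
    (A : Y → Set (StrongDual ℝ Y)) (B : Z → Set (StrongDual ℝ Z))
    (hAmono : ∀ x y u v, u ∈ A x → v ∈ A y → (0:ℝ) ≤ (u - v) (x - y))
    (hAmax : ∀ A' : Y → Set (StrongDual ℝ Y),
      (∀ x y u v, u ∈ A' x → v ∈ A' y → (0:ℝ) ≤ (u - v) (x - y)) →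
      (∀ x, A x ⊆ A' x) → ∀ x, A' x ⊆ A x)
    (hBmono : ∀ x y u v, u ∈ B x → v ∈ B y → (0:ℝ) ≤ (u - v) (x - y))
    (hBmax : ∀ B' : Z → Set (StrongDual ℝ Z),
      (∀ x y u v, u ∈ B' x → v ∈ B' y → (0:ℝ) ≤ (u - v) (x - y)) →
      (∀ x, B x ⊆ B' x) → ∀ x, B' x ⊆ B x)
    (L : Y →L[ℝ] Z) (sstar : StrongDual ℝ Y) (r : Z) :
    -- P ≠ ∅ ↔ D ≠ ∅
    ((∃ x : Y, ∃ u ∈ A x, ∃ w ∈ B (L x - r), sstar = u + w.comp L) ↔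
      (∃ vs : StrongDual ℝ Z, ∃ x' : Y, ∃ w : Z,
        sstar - vs.comp L ∈ A x' ∧ vs ∈ B w ∧ -r = -(L x') + w)) ∧
    -- D ≠ ∅ ↔ Z ≠ ∅
    ((∃ vs : StrongDual ℝ Z, ∃ x' : Y, ∃ w : Z,
        sstar - vs.comp L ∈ A x' ∧ vs ∈ B w ∧ -r = -(L x') + w) ↔
      (∃ (x : Y) (vs : StrongDual ℝ Z), sstar - vs.comp L ∈ A x ∧ vs ∈ B (L x - r))) ∧
    -- Z ≠ ∅ ↔ zer M ≠ ∅
    ((∃ (x : Y) (vs : StrongDual ℝ Z), sstar - vs.comp L ∈ A x ∧ vs ∈ B (L x - r)) ↔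
      (∃ p : Y × Z × StrongDual ℝ Z,
        ((0 : StrongDual ℝ Y), (0 : StrongDual ℝ Z), (0 : Z)) ∈ tripleM A B L sstar r p)) :=
  stmt_9_general A B L sstar r
end

section
/- Let X be a reflexive real Banach space, let D be a nonempty subset of X, let K : D → X* be monotone and maximally monotone (as an operator X → 2^{X*} with domain D), and let φ : X → ℝ be a convex, lower semicontinuous, coercive function (φ(x) → ∞ as ‖x‖ → ∞) that is everywhere finite. Then ran K ⊂ ran(K + ∂φ), where ∂φ is the convex subdifferential of φ. -/
/-!
Fix `x ∈ D` and put `w = K x`. In `X × X* × ℝ`, the epigraph of `(z, z*) ↦ φ z + φ^* z*` has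
nonempty interior (`φ` is continuous by Baire and grows linearly by coercivity, so `φ^*` is
bounded near `0`), and by Fenchel–Young and maximality of `K` this interior misses the hypograph
of `(z, z*) ↦ ⟨w, z⟩ - F(z, w - z*)`, `F` the Fitzpatrick function of `K`. The separating
hyperplane is non-vertical and, by reflexivity, of the form `t = ⟨u, z⟩ + ⟨z*, ζ⟩ - σ`. Tested on
the epigraph it gives `⟨u, z⟩ - φ z + φ ζ ≤ σ`; tested on the graph of `K` it makes `(ζ, w - u)`
monotonically related to `K`, so `K ζ = w - u` by maximality, and then `σ = ⟨u, ζ⟩`, i.e.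
`u ∈ ∂φ ζ`.
-/

open NormedSpace Filter

def BMono {X : Type*} [NormedAddCommGroup X] [NormedSpace ℝ X]
    (A : X → Set (StrongDual ℝ X)) : Prop :=
  ∀ x y u v, u ∈ A x → v ∈ A y → (0:ℝ) ≤ (u - v) (x - y)

def BMaxMono {X : Type*} [NormedAddCommGroup X] [NormedSpace ℝ X]
    (A : X → Set (StrongDual ℝ X)) : Prop :=
  BMono A ∧ ∀ A', BMono A' → (∀ x, A x ⊆ A' x) → ∀ x, A' x ⊆ A x

/-- `K` viewed as a set-valued operator with domain `D`. -/
def opOfMap {X : Type*} [NormedAddCommGroup X] [NormedSpace ℝ X]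
    (D : Set X) (K : X → StrongDual ℝ X) : X → Set (StrongDual ℝ X) :=
  fun x => {w | x ∈ D ∧ w = K x}

def subdiff {X : Type*} [NormedAddCommGroup X] [NormedSpace ℝ X]
    (φ : X → ℝ) (x : X) : Set (StrongDual ℝ X) :=
  {u | ∀ y, u (y - x) + φ x ≤ φ y}

open Set Topology

theorem exists_sub_mem_of_mem_interior {E : Type*} [TopologicalSpace E] {A : Set (E × ℝ)}
    {q : E × ℝ} (hq : q ∈ interior A) :
    ∃ δ > 0, (q.1, q.2 - δ) ∈ A := by
  have hcont : Continuous fun δ : ℝ ↦ (q.1, q.2 - δ) := by fun_prop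
  have hnhds : interior A ∈ 𝓝 ((fun δ : ℝ ↦ (q.1, q.2 - δ)) 0) := by
    simpa using isOpen_interior.mem_nhds hq
  obtain ⟨δ, hδ, hδA⟩ := (hcont.continuousAt.eventually_mem hnhds).exists_gt
  exact ⟨δ, hδ, interior_subset hδA⟩

section Separation

variable {E : Type*} [TopologicalSpace E] [AddCommGroup E] [Module ℝ E]
  [IsTopologicalAddGroup E] [ContinuousSMul ℝ E]

/-- The vertical ray over `p` forces the `ℝ`-coefficient of the separating functional to be
negative, so the separating hyperplane is a graph over `E`. -/
theorem geometric_hahn_banach_nonvertical {A B : Set (E × ℝ)} (hA : Convex ℝ A)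
    (hB : Convex ℝ B) (hAB : Disjoint (interior A) B) {p : E} {T t : ℝ}
    (hpA : ∀ s > T, (p, s) ∈ interior A) (hpB : (p, t) ∈ B) :
    ∃ (g : StrongDual ℝ E) (σ : ℝ), (∀ q ∈ A, g q.1 - q.2 ≤ σ) ∧ ∀ q ∈ B, σ ≤ g q.1 - q.2 := by
  obtain ⟨f, s, hfA, hfB⟩ := geometric_hahn_banach_open hA.interior isOpen_interior hB hAB
  set β := f (0, 1)
  have hdec (q : E × ℝ) : f q = f (q.1, 0) + q.2 * β := by
    rw [← smul_eq_mul, ← map_smul, ← map_add]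
    simp
  have hβ : β < 0 := by
    have h := (hfA _ (hpA (max T t + 1) (by linarith [le_max_left T t]))).trans_le (hfB _ hpB)
    rw [hdec (p, _), hdec (p, t)] at h
    nlinarith [le_max_right T t]
  have hfA' : ∀ q ∈ A, f q ≤ s := by
    have hint : (interior A).Nonempty := ⟨_, hpA (T + 1) (lt_add_one T)⟩
    refine fun q hq ↦ closure_minimal (fun q hq ↦ (hfA q hq).le)
      (isClosed_Iic.preimage f.continuous) ?_
    rw [hA.closure_interior_eq_closure_of_nonempty_interior hint]
    exact subset_closure hq
  set g : StrongDual ℝ E := (-β)⁻¹ • f.comp (ContinuousLinearMap.inl ℝ E ℝ)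
  have hfg (q : E × ℝ) : f q = -β * (g q.1 - q.2) := by
    rw [hdec q]
    simp only [g, smul_apply, ContinuousLinearMap.comp_apply,
      ContinuousLinearMap.inl_apply, smul_eq_mul]
    field_simp [hβ.ne]
    ring
  refine ⟨g, s / -β, fun q hq ↦ ?_, fun q hq ↦ ?_⟩
  · rw [le_div_iff₀' (neg_pos.2 hβ), ← hfg]
    exact hfA' q hq
  · rw [div_le_iff₀' (neg_pos.2 hβ), ← hfg]
    exact hfB q hq

end Separation

section ConvexFunction

variable {X : Type*} [NormedAddCommGroup X] [NormedSpace ℝ X] {φ : X → ℝ}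

/-- By Baire, some sublevel set `{φ ≤ n}` has interior, so `φ` is bounded above near a point;
for convex functions this already forces continuity. -/
theorem ConvexOn.continuous_of_lowerSemicontinuous [CompleteSpace X]
    (hconv : ConvexOn ℝ univ φ) (hlsc : LowerSemicontinuous φ) : Continuous φ := by
  obtain ⟨n, z, hz⟩ := nonempty_interior_of_iUnion_of_closed
    (fun n : ℕ ↦ hlsc.isClosed_preimage n) (iUnion_eq_univ_iff.2 fun z ↦ exists_nat_ge (φ z))
  have hbdd : (𝓝 z).IsBoundedUnder (· ≤ ·) φ :=
    isBoundedUnder_of_eventually_le (mem_interior_iff_mem_nhds.1 hz)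
  have htfae := (hconv.continuousOn_tfae isOpen_univ univ_nonempty).out 3 1
  exact continuousOn_univ.1 (htfae.1 ⟨z, mem_univ z, hbdd⟩)

theorem ConvexOn.subdiff_nonempty (hconv : ConvexOn ℝ univ φ) (hcont : Continuous φ) (x : X) :
    (subdiff φ x).Nonempty := by
  have hepi : Convex ℝ {q : X × ℝ | φ q.1 ≤ q.2} := by simpa using hconv.convex_epigraph
  have hint : ∀ t > φ x, (x, t) ∈ interior {q : X × ℝ | φ q.1 ≤ q.2} := fun t ht ↦
    interior_maximal (fun q hq ↦ le_of_lt hq) (isOpen_lt (by fun_prop) continuous_snd) ht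
  have hx : Disjoint (interior {q : X × ℝ | φ q.1 ≤ q.2}) {(x, φ x)} := by
    refine disjoint_singleton_right.2 fun h ↦ ?_
    obtain ⟨δ, hδ, hδx⟩ := exists_sub_mem_of_mem_interior h
    exact (sub_lt_self _ hδ).not_ge hδx
  obtain ⟨g, σ, hgepi, hgx⟩ := geometric_hahn_banach_nonvertical hepi (convex_singleton _) hx
    hint (mem_singleton _)
  refine ⟨g, fun y ↦ ?_⟩
  have h₁ := hgepi (y, φ y) (show φ y ≤ φ y from le_rfl)
  have h₂ := hgx _ (mem_singleton _)
  simp only [map_sub] at h₁ h₂ ⊢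
  linarith

theorem ConvexOn.add_norm_div_le {R : ℝ} (hconv : ConvexOn ℝ univ φ) (hR : 0 < R)
    (hsphere : ∀ z, ‖z‖ = R → φ 0 + 1 ≤ φ z) {z : X} (hz : R ≤ ‖z‖) :
    φ 0 + ‖z‖ / R ≤ φ z := by
  have hz₀ : 0 < ‖z‖ := hR.trans_le hz
  set s := R / ‖z‖
  have hs : 0 < s := div_pos hR hz₀
  have hs₁ : s ≤ 1 := (div_le_one hz₀).2 hz
  have hφs : φ 0 + 1 ≤ φ (s • z) := hsphere _ <| by
    rw [norm_smul, Real.norm_of_nonneg hs.le, div_mul_cancel₀ _ hz₀.ne']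
  have hcx : φ (s • z) ≤ (1 - s) * φ 0 + s * φ z := by
    simpa using hconv.2 (mem_univ 0) (mem_univ z) (sub_nonneg.2 hs₁) hs.le (sub_add_cancel 1 s)
  have h : 1 ≤ s * (φ z - φ 0) := by linarith
  rw [← div_le_iff₀' hs, one_div_div] at h
  linarith

theorem ConvexOn.exists_mul_norm_le_add (hconv : ConvexOn ℝ univ φ)
    (hcoer : Tendsto φ (Bornology.cobounded X) atTop) (hsub : (subdiff φ 0).Nonempty) :
    ∃ ε > 0, ∃ C, ∀ z : X, ε * ‖z‖ ≤ φ z + C := by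
  obtain ⟨ℓ, hℓ⟩ := hsub
  have hev := hcoer.eventually_ge_atTop (φ 0 + 1)
  rw [← comap_norm_atTop, eventually_comap, eventually_atTop] at hev
  obtain ⟨R₀, hR₀⟩ := hev
  set R := max R₀ 1
  have hR : 0 < R := lt_max_of_lt_right one_pos
  have hfar : ∀ z : X, R ≤ ‖z‖ → φ 0 + ‖z‖ / R ≤ φ z := fun z ↦
    hconv.add_norm_div_le hR fun y hy ↦ hR₀ _ (hy ▸ le_max_left R₀ 1) y rfl
  refine ⟨1 / R, one_div_pos.2 hR, ‖ℓ‖ * R + 1 - φ 0, fun z ↦ ?_⟩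
  rw [one_div_mul_eq_div]
  rcases le_or_gt R ‖z‖ with hz | hz
  · nlinarith [hfar z hz, norm_nonneg ℓ]
  · have hnear : φ 0 - ‖ℓ‖ * R ≤ φ z := by
      have h₁ := hℓ z
      have h₂ := neg_le_of_abs_le (ℓ.le_opNorm z)
      rw [sub_zero] at h₁
      nlinarith [norm_nonneg ℓ]
    have : ‖z‖ / R < 1 := (div_lt_one hR).2 hz
    linarith

end ConvexFunction

section MonotoneOperator

variable {X : Type*} [NormedAddCommGroup X] [NormedSpace ℝ X] {D : Set X}
  {K : X → StrongDual ℝ X}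

theorem BMaxMono.mem_of_forall_nonneg (hK : BMaxMono (opOfMap D K)) {y : X}
    {v : StrongDual ℝ X} (h : ∀ a ∈ D, 0 ≤ (v - K a) (y - a)) : y ∈ D ∧ v = K y := by
  let A : X → Set (StrongDual ℝ X) := fun z ↦ opOfMap D K z ∪ {v' | z = y ∧ v' = v}
  have hA : BMono A := by
    rintro p q up uq (⟨hp, rfl⟩ | ⟨rfl, rfl⟩) (⟨hq, rfl⟩ | ⟨rfl, rfl⟩)
    · exact hK.1 p q _ _ ⟨hp, rfl⟩ ⟨hq, rfl⟩
    · have := h p hp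
      simp only [sub_apply, map_sub] at this ⊢
      linarith
    · exact h q hq
    · simp
  exact hK.2 A hA (fun _ ↦ subset_union_left) y (Or.inr ⟨rfl, rfl⟩)

end MonotoneOperator

section FenchelFitzpatrick

variable {X : Type*} [NormedAddCommGroup X] [NormedSpace ℝ X]

/-- The epigraph of `(z, z*) ↦ φ z + φ^* z*`, with `φ^*` the Fenchel conjugate. -/
def fenchelEpigraph (φ : X → ℝ) : Set ((X × StrongDual ℝ X) × ℝ) :=
  {q | ∀ y, q.1.2 y - φ y + φ q.1.1 ≤ q.2}

/-- The hypograph of `(z, z*) ↦ ⟨w, z⟩ - F(z, w - z*)`, where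
`F(z, v) = sup_{a ∈ D} (⟨K a, z⟩ + ⟨v, a⟩ - ⟨K a, a⟩)` is the Fitzpatrick function of `K`. -/
def fitzpatrickHypograph (D : Set X) (K : X → StrongDual ℝ X) (w : StrongDual ℝ X) :
    Set ((X × StrongDual ℝ X) × ℝ) :=
  {q | ∀ a ∈ D, q.2 ≤ (w - K a) (q.1.1 - a) + q.1.2 a}

theorem convex_fenchelEpigraph {φ : X → ℝ} (hconv : ConvexOn ℝ univ φ) :
    Convex ℝ (fenchelEpigraph φ) := by
  intro q₁ h₁ q₂ h₂ a b ha hb hab y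
  have hφ := hconv.2 (mem_univ q₁.1.1) (mem_univ q₂.1.1) ha hb hab
  obtain rfl : b = 1 - a := eq_sub_of_add_eq' hab
  simp only [smul_eq_mul, Prod.fst_add, Prod.snd_add, Prod.smul_fst, Prod.smul_snd,
    add_apply, smul_apply] at hφ ⊢
  nlinarith [mul_le_mul_of_nonneg_left (h₁ y) ha, mul_le_mul_of_nonneg_left (h₂ y) hb]

theorem convex_fitzpatrickHypograph (D : Set X) (K : X → StrongDual ℝ X) (w : StrongDual ℝ X) :
    Convex ℝ (fitzpatrickHypograph D K w) := by
  intro q₁ h₁ q₂ h₂ a b ha hb hab c hc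
  have h₁c := mul_le_mul_of_nonneg_left (h₁ c hc) ha
  have h₂c := mul_le_mul_of_nonneg_left (h₂ c hc) hb
  obtain rfl : b = 1 - a := eq_sub_of_add_eq' hab
  simp only [smul_eq_mul, Prod.fst_add, Prod.snd_add, Prod.smul_fst, Prod.smul_snd,
    add_apply, smul_apply, map_sub, map_add, map_smul] at h₁c h₂c ⊢
  linarith

theorem mem_fenchelEpigraph_of_mem_subdiff {φ : X → ℝ} {ζ : X} {ℓ : StrongDual ℝ X}
    (hℓ : ℓ ∈ subdiff φ ζ) (z : X) : ((z, ℓ), φ z + (ℓ ζ - φ ζ)) ∈ fenchelEpigraph φ := by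
  intro y
  have := hℓ y
  simp only [map_sub] at this ⊢
  linarith

theorem mem_fitzpatrickHypograph {D : Set X} {K : X → StrongDual ℝ X}
    (hK : BMono (opOfMap D K)) {b : X} (hb : b ∈ D) (w : StrongDual ℝ X) :
    ((b, w - K b), w b - K b b) ∈ fitzpatrickHypograph D K w := by
  intro a ha
  have := hK b a _ _ ⟨hb, rfl⟩ ⟨ha, rfl⟩
  simp only [sub_apply, map_sub] at this ⊢
  linarith

theorem mem_interior_fenchelEpigraph {φ : X → ℝ} (hcont : Continuous φ) {ε C : ℝ} (hε : 0 < ε)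
    (hC : ∀ z, ε * ‖z‖ ≤ φ z + C) {x : X} {t : ℝ} (ht : φ x + C < t) :
    ((x, 0), t) ∈ interior (fenchelEpigraph φ) := by
  let U : Set ((X × StrongDual ℝ X) × ℝ) := {q | φ q.1.1 + C < q.2 ∧ ‖q.1.2‖ < ε}
  have hU : IsOpen U :=
    (isOpen_lt (by fun_prop) continuous_snd).inter
      (isOpen_lt (continuous_norm.comp (continuous_snd.comp continuous_fst)) continuous_const)
  refine interior_maximal ?_ hU (show ((x, 0), t) ∈ U from ⟨ht, by simpa using hε⟩)
  rintro ⟨⟨z, zs⟩, s⟩ ⟨hs, hzs⟩ y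
  have h₁ : zs y ≤ ε * ‖y‖ :=
    (le_abs_self _).trans <| (zs.le_opNorm y).trans <| by gcongr
  linarith [hC y]

/-- Fenchel–Young makes `z* z ≤ t` on the epigraph, while maximality of `K` makes `t ≤ z* z`
on the hypograph; the interior leaves room for strictness. -/
theorem disjoint_interior_fenchelEpigraph {D : Set X} {K : X → StrongDual ℝ X}
    (hK : BMaxMono (opOfMap D K)) (φ : X → ℝ) (w : StrongDual ℝ X) :
    Disjoint (interior (fenchelEpigraph φ)) (fitzpatrickHypograph D K w) := by
  rw [disjoint_left]
  rintro ⟨⟨z, zs⟩, t⟩ hE hB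
  obtain ⟨δ, hδ, hδE⟩ := exists_sub_mem_of_mem_interior hE
  have hyoung : zs z ≤ t - δ := by simpa using hδE z
  obtain ⟨a, ha, hle⟩ : ∃ a ∈ D, (w - zs - K a) (z - a) ≤ 0 := by
    by_contra! h
    obtain ⟨hz, hzK⟩ := hK.mem_of_forall_nonneg fun a ha ↦ (h a ha).le
    simpa [← hzK] using h z hz
  have hBa := hB a ha
  simp only [sub_apply, map_sub] at hle hBa
  linarith

end FenchelFitzpatrick

theorem stmt_13_general
    {X : Type*} [NormedAddCommGroup X] [NormedSpace ℝ X] [CompleteSpace X]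
    (hrefl : Function.Surjective ⇑(inclusionInDoubleDual ℝ X))
    (D : Set X)
    (K : X → StrongDual ℝ X)
    (hKmax : BMaxMono (opOfMap D K))
    (φ : X → ℝ)
    (hconv : ConvexOn ℝ Set.univ φ)
    (hlsc : LowerSemicontinuous φ)
    (hcoer : Tendsto φ (Bornology.cobounded X) atTop) :
    ∀ x ∈ D, ∃ p ∈ D, ∃ u ∈ subdiff φ p, K x = K p + u := by
  intro x hx
  have hcont := hconv.continuous_of_lowerSemicontinuous hlsc
  obtain ⟨ε, hε, C, hC⟩ := hconv.exists_mul_norm_le_add hcoer (hconv.subdiff_nonempty hcont 0)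
  obtain ⟨g, σ, hE, hB⟩ := geometric_hahn_banach_nonvertical (E := X × StrongDual ℝ X)
    (convex_fenchelEpigraph hconv) (convex_fitzpatrickHypograph D K (K x))
    (disjoint_interior_fenchelEpigraph hKmax φ (K x))
    (fun t ht ↦ mem_interior_fenchelEpigraph hcont hε hC ht)
    (by simpa using mem_fitzpatrickHypograph hKmax.1 hx (K x))
  obtain ⟨ζ, hζ⟩ := hrefl (g.comp (.inr ℝ X (StrongDual ℝ X)))
  set u := g.comp (.inl ℝ X (StrongDual ℝ X))
  have hg (q : X × StrongDual ℝ X) : g q = u q.1 + q.2 ζ := by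
    rw [← g.comp_inl_add_comp_inr, ← hζ, dual_def]
  have hφ (z : X) : u z - φ z + φ ζ ≤ σ := by
    obtain ⟨ℓ, hℓ⟩ := hconv.subdiff_nonempty hcont ζ
    have := hE _ (mem_fenchelEpigraph_of_mem_subdiff hℓ z)
    rw [hg] at this
    linarith
  have hK (b : X) (hb : b ∈ D) : σ ≤ u b + (K x - K b) ζ - (K x b - K b b) := by
    simpa only [hg] using hB _ (mem_fitzpatrickHypograph hKmax.1 hb (K x))
  obtain ⟨hζD, hKζ⟩ := hKmax.mem_of_forall_nonneg (y := ζ) (v := K x - u) fun b hb ↦ by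
    have h₁ := hK b hb
    have h₂ := hφ ζ
    simp only [sub_apply, map_sub] at h₁ ⊢
    linarith
  refine ⟨ζ, hζD, u, fun y ↦ ?_, by rw [← hKζ, sub_add_cancel]⟩
  have h₁ := hK ζ hζD
  have h₂ := hφ y
  simp only [sub_apply, map_sub] at h₁ ⊢
  linarith

/-- Proposition 3.10(i)[f]: if `K` is (maximally) monotone and `φ` is a real-valued
lower semicontinuous coercive convex function, then `ran K ⊆ ran (K + ∂φ)`. -/
theorem stmt_13
    {X : Type*} [NormedAddCommGroup X] [NormedSpace ℝ X] [CompleteSpace X]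
    (hrefl : Function.Surjective ⇑(inclusionInDoubleDual ℝ X))
    (D : Set X) (hD : D.Nonempty)
    (K : X → StrongDual ℝ X)
    (hKmono : BMono (opOfMap D K))
    (hKmax : BMaxMono (opOfMap D K))
    (φ : X → ℝ)
    (hconv : ConvexOn ℝ Set.univ φ)
    (hlsc : LowerSemicontinuous φ)
    (hcoer : Tendsto φ (Bornology.cobounded X) atTop) :
    ∀ x ∈ D, ∃ p ∈ D, ∃ u ∈ subdiff φ p, K x = K p + u :=
  stmt_13_general hrefl D K hKmax φ hconv hlsc hcoer
end

section
/- Let X be a reflexive real Banach space, let M : X → 2^{X*} be monotone, let γ > 0, and let K : X → X* be β-Lipschitzian and α-strongly monotone for some α, β > 0, such that ran K ⊂ ran(K + γM) and K + γM is injective. Then the warped resolvent J^K_{γM} = (K + γM)^{-1} ∘ K is (β/α)-Lipschitzian: ‖J^K_{γM}x − J^K_{γM}y‖ ≤ (β/α)‖x − y‖ for all x, y ∈ X. -/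
/-!
Monotonicity of `M`, tested at the two points `γ⁻¹ (K x - K (J x)) ∈ M (J x)`, shows that `K` pairs
no more strongly with `J x - J y` at `J x, J y` than at `x, y`. Strong monotonicity of `K` bounds
the former below by `α ‖J x - J y‖²`, and the Lipschitz bound on `K` bounds the latter above by
`β ‖x - y‖ ‖J x - J y‖`.
-/

open NormedSpace

section WarpedResolvent

variable {X : Type*} [NormedAddCommGroup X] [NormedSpace ℝ X]

lemma warpedResolvent_apply_sub_le
    {M : X → Set (StrongDual ℝ X)}
    (hM : ∀ x y u v, u ∈ M x → v ∈ M y → (0:ℝ) ≤ (u - v) (x - y))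
    {γ : ℝ} (hγ : 0 < γ) (K : X → StrongDual ℝ X) {J : X → X}
    (hJ : ∀ x, γ⁻¹ • (K x - K (J x)) ∈ M (J x)) (x y : X) :
    (K (J x) - K (J y)) (J x - J y) ≤ (K x - K y) (J x - J y) := by
  have hmono := hM _ _ _ _ (hJ x) (hJ y)
  have hexpand : (γ⁻¹ • (K x - K (J x)) - γ⁻¹ • (K y - K (J y))) (J x - J y)
      = γ⁻¹ * ((K x - K y) (J x - J y) - (K (J x) - K (J y)) (J x - J y)) := by
    simp only [sub_apply, smul_apply, smul_eq_mul]
    ring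
  rw [hexpand] at hmono
  exact sub_nonneg.mp (nonneg_of_mul_nonneg_right hmono (inv_pos.mpr hγ))

lemma norm_le_opNorm_div_of_mul_sq_le {α : ℝ} (hα : 0 < α) (f : StrongDual ℝ X) (u : X)
    (h : α * ‖u‖ ^ 2 ≤ f u) : ‖u‖ ≤ ‖f‖ / α := by
  rw [le_div_iff₀ hα]
  rcases (norm_nonneg u).eq_or_lt with hu | hu
  · rw [← hu, zero_mul]
    exact norm_nonneg f
  · have hfu : f u ≤ ‖f‖ * ‖u‖ := (le_abs_self _).trans (f.le_opNorm u)
    nlinarith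

end WarpedResolvent

theorem stmt_16_general
    {X : Type*} [NormedAddCommGroup X] [NormedSpace ℝ X]
    (M : X → Set (StrongDual ℝ X))
    (hMmono : ∀ x y u v, u ∈ M x → v ∈ M y → (0:ℝ) ≤ (u - v) (x - y))
    (γ : ℝ) (hγ : 0 < γ)
    (K : X → StrongDual ℝ X) (α β : ℝ) (hα : 0 < α)
    (hKlip : ∀ x y, ‖K x - K y‖ ≤ β * ‖x - y‖)
    (hKsm : ∀ x y, α * ‖x - y‖ ^ 2 ≤ (K x - K y) (x - y))
    -- J is the warped resolvent J^K_{γM} = (K + γM)⁻¹ ∘ K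
    (Jr : X → X)
    (hJ : ∀ x, γ⁻¹ • (K x - K (Jr x)) ∈ M (Jr x)) :
    ∀ x y : X, ‖Jr x - Jr y‖ ≤ (β / α) * ‖x - y‖ := by
  intro x y
  have hsq : α * ‖Jr x - Jr y‖ ^ 2 ≤ (K x - K y) (Jr x - Jr y) :=
    (hKsm _ _).trans (warpedResolvent_apply_sub_le hMmono hγ K hJ x y)
  calc ‖Jr x - Jr y‖ ≤ ‖K x - K y‖ / α := norm_le_opNorm_div_of_mul_sq_le hα _ _ hsq
    _ ≤ β * ‖x - y‖ / α := by gcongr; exact hKlip x y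
    _ = β / α * ‖x - y‖ := by ring

/-- Proposition 3.11(v): if `M` is monotone and `K` is `β`-Lipschitzian and
`α`-strongly monotone, then the warped resolvent `J^K_{γM}` is `(β/α)`-Lipschitzian. -/
theorem stmt_16
    {X : Type*} [NormedAddCommGroup X] [NormedSpace ℝ X] [CompleteSpace X]
    (hrefl : Function.Surjective ⇑(inclusionInDoubleDual ℝ X))
    (M : X → Set (StrongDual ℝ X))
    (hMmono : ∀ x y u v, u ∈ M x → v ∈ M y → (0:ℝ) ≤ (u - v) (x - y))
    (γ : ℝ) (hγ : 0 < γ)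
    (K : X → StrongDual ℝ X) (α β : ℝ) (hα : 0 < α) (hβ : 0 < β)
    (hKlip : ∀ x y, ‖K x - K y‖ ≤ β * ‖x - y‖)
    (hKsm : ∀ x y, α * ‖x - y‖ ^ 2 ≤ (K x - K y) (x - y))
    -- ran K ⊆ ran (K + γM)
    (hran : ∀ x, ∃ p, ∃ u ∈ M p, K x = K p + γ • u)
    -- K + γM is injective
    (hinj : ∀ p q, (∃ w, (∃ u ∈ M p, w = K p + γ • u) ∧ ∃ u ∈ M q, w = K q + γ • u) →
      p = q)
    -- J is the warped resolvent J^K_{γM} = (K + γM)⁻¹ ∘ K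
    (Jr : X → X)
    (hJ : ∀ x, γ⁻¹ • (K x - K (Jr x)) ∈ M (Jr x)) :
    ∀ x y : X, ‖Jr x - Jr y‖ ≤ (β / α) * ‖x - y‖ :=
  stmt_16_general M hMmono γ hγ K α β hα hKlip hKsm Jr hJ
end
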